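/- arXiv:1109.1064 — 7 statements merged into one kernel-verified Lean document; each statement's English description precedes it below -/
import Mathlib

section
/- For a semigroup X the following conditions are equivalent: (1) υ(X) is a finite semilattice; (2) υ(X) is an inverse semigroup; (3) the idempotents of the semigroup υ(X) commute and υ(X) is sub-Clifford or regular; (4) X is a finite linear semilattice, isomorphic to Lₙ for some integer n ≥ 0. -/
open Set

/-- An *upfamily* on `X`: a nonempty family of nonempty subsets of `X`
that is closed under taking supersets. -/
def IsUpfamily {X : Type*} (F : Set (Set X)) : Prop :=
  F.Nonempty ∧ (∀ A ∈ F, A.Nonempty) ∧ ∀ A ∈ F, ∀ B : Set X, A ⊆ B → B ∈ F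

/-- The space `υ(X)` of upfamilies on `X`. -/
def Upfamily (X : Type*) : Type _ := {F : Set (Set X) // IsUpfamily F}

/-- The extension of the binary operation of `X` to families of subsets of `X`:
`𝓐*𝓑 = ⟨⋃_{a ∈ A} a*B_a : A ∈ 𝓐, {B_a}_{a∈A} ⊆ 𝓑⟩`. -/
def upMul {X : Type*} [Mul X] (F G : Set (Set X)) : Set (Set X) :=
  {C | ∃ A ∈ F, ∃ B : X → Set X, (∀ a ∈ A, B a ∈ G) ∧ (⋃ a ∈ A, (fun y => a * y) '' B a) ⊆ C}

theorem IsUpfamily.upMul {X : Type*} [Mul X] {F G : Set (Set X)}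
    (hF : IsUpfamily F) (hG : IsUpfamily G) : IsUpfamily (upMul F G) := by
  obtain ⟨⟨A0, hA0⟩, hFne, hFup⟩ := hF
  obtain ⟨⟨B0, hB0⟩, hGne, hGup⟩ := hG
  refine ⟨⟨univ, A0, hA0, fun _ => B0, fun a _ => hB0, subset_univ _⟩, ?_, ?_⟩
  · rintro C ⟨A, hA, B, hB, hsub⟩
    obtain ⟨a, ha⟩ := hFne A hA
    obtain ⟨b, hb⟩ := hGne (B a) (hB a ha)
    exact ⟨a * b, hsub (mem_biUnion ha ⟨b, hb, rfl⟩)⟩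
  · rintro C ⟨A, hA, B, hB, hsub⟩ D hCD
    exact ⟨A, hA, B, hB, hsub.trans hCD⟩

/-- `υ(X)` is a semigroup under the extended operation. -/
instance {X : Type*} [Mul X] : Mul (Upfamily X) :=
  ⟨fun F G => ⟨upMul F.1 G.1, F.2.upMul G.2⟩⟩

/-- The embedding `X → υ(X)`, `x ↦ ⟨x⟩ = {A ⊆ X : x ∈ A}`. -/
def Upfamily.principal {X : Type*} (x : X) : Upfamily X :=
  ⟨{A | x ∈ A}, ⟨univ, mem_univ x⟩, fun A hA => ⟨x, hA⟩, fun _ hA _ hAB => hAB hA⟩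

/-- An upfamily is linked if any two of its members intersect. -/
def Upfamily.Linked {X : Type*} (F : Upfamily X) : Prop :=
  ∀ A ∈ F.1, ∀ B ∈ F.1, (A ∩ B).Nonempty

/-- Maximal linked upfamilies. -/
def Upfamily.IsMaxLinked {X : Type*} (F : Upfamily X) : Prop :=
  F.Linked ∧ ∀ G : Upfamily X, G.Linked → F.1 ⊆ G.1 → F = G

/-- Filters: upfamilies closed under binary intersections. -/
def Upfamily.IsFilter {X : Type*} (F : Upfamily X) : Prop :=
  ∀ A ∈ F.1, ∀ B ∈ F.1, A ∩ B ∈ F.1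

/-- Ultrafilters: maximal filters. -/
def Upfamily.IsUltrafilter {X : Type*} (F : Upfamily X) : Prop :=
  F.IsFilter ∧ ∀ G : Upfamily X, G.IsFilter → F.1 ⊆ G.1 → F = G

/-- The superextension `λ(X)` of maximal linked upfamilies. -/
def lambdaS (X : Type*) : Set (Upfamily X) := {F | F.IsMaxLinked}

/-- The semigroup `N₂(X)` of linked upfamilies. -/
def N2S (X : Type*) : Set (Upfamily X) := {F | F.Linked}

/-- The semigroup `φ(X)` of filters. -/
def phiS (X : Type*) : Set (Upfamily X) := {F | F.IsFilter}

/-- The Stone-Čech extension `β(X)` of ultrafilters. -/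
def betaS (X : Type*) : Set (Upfamily X) := {F | F.IsUltrafilter}

section SemigroupProps

variable {M : Type*} [Mul M]

/-- A subset closed under multiplication (i.e. a subsemigroup). -/
def mulClosed (S : Set M) : Prop := ∀ a ∈ S, ∀ b ∈ S, a * b ∈ S

/-- The operation is commutative on `S`. -/
def commOn (S : Set M) : Prop := ∀ a ∈ S, ∀ b ∈ S, a * b = b * a

/-- The idempotents of `S` commute. -/
def idemCommOn (S : Set M) : Prop :=
  ∀ a ∈ S, ∀ b ∈ S, a * a = a → b * b = b → a * b = b * a

/-- `S` is an inverse semigroup: every element has a unique inverse in `S`. -/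
def inverseOn (S : Set M) : Prop :=
  ∀ a ∈ S, ∃! b, b ∈ S ∧ a * b * a = a ∧ b * a * b = b

/-- `H` is a subgroup of the ambient multiplicative structure:
it is closed under multiplication and carries a group structure. -/
def IsSubgroupIn (H : Set M) : Prop :=
  (∀ a ∈ H, ∀ b ∈ H, a * b ∈ H) ∧
    ∃ e ∈ H, (∀ a ∈ H, e * a = a ∧ a * e = a) ∧ ∀ a ∈ H, ∃ b ∈ H, a * b = e ∧ b * a = e

/-- `S` is a Clifford semigroup: a union of groups. -/
def cliffordOn (S : Set M) : Prop := ∀ a ∈ S, ∃ H ⊆ S, IsSubgroupIn H ∧ a ∈ H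

/-- `S` is regular in `T`: every `a ∈ S` satisfies `a ∈ a T a`. -/
def regularIn (S T : Set M) : Prop := ∀ a ∈ S, ∃ b ∈ T, a * b * a = a

/-- `ppow a n = a^(n+1)`: positive powers in a semigroup. -/
def ppow (a : M) : ℕ → M
  | 0 => a
  | n + 1 => ppow a n * a

/-- `S` is sub-Clifford: `x^{n+1} = x^{m+1}` implies `x^n = x^m` for positive `n < m`. -/
def subCliffordOn (S : Set M) : Prop :=
  ∀ a ∈ S, ∀ n m : ℕ, n < m → ppow a (n + 1) = ppow a (m + 1) → ppow a n = ppow a m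

end SemigroupProps

/-- The cyclic group `Cₙ` of order `n`. -/
abbrev Cgrp (n : ℕ) : Type := Multiplicative (ZMod n)

/-- The linear semilattice `Lₙ = {0,…,n-1}` with the operation of minimum. -/
def L (n : ℕ) : Type := Fin n

instance {n : ℕ} : Mul (L n) :=
  ⟨fun a b => show Fin n from min (show Fin n from a) (show Fin n from b)⟩

/-- The disjoint ordered union `X ⊔ Y` of two semigroups, in which
`x * y = y * x = x` for `x ∈ X` and `y ∈ Y`. -/
abbrev OSum (A B : Type*) : Type _ := A ⊕ B

instance {A B : Type*} [Mul A] [Mul B] : Mul (OSum A B) :=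
  ⟨fun x y =>
    match x, y with
    | Sum.inl a, Sum.inl a' => Sum.inl (a * a')
    | Sum.inl a, Sum.inr _ => Sum.inl a
    | Sum.inr _, Sum.inl a => Sum.inl a
    | Sum.inr b, Sum.inr b' => Sum.inr (b * b')⟩

/-- `M` is isomorphic to the sub-semigroup `S` of `N`: there is an injective
operation-preserving map of `M` onto `S`. -/
def MulIsoOnto (M : Type*) [Mul M] {N : Type*} [Mul N] (S : Set N) : Prop :=
  ∃ f : M → N, Function.Injective f ∧ Set.range f = S ∧ ∀ x y : M, f (x * y) = f x * f y

/-!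
For a proper filter `f` on `X`, the upfamily `ofFilter f` of its members and its grill are both
idempotent as soon as almost every left translation `a * ·` maps `f` to `f` (or to `pure a`); then
each of them absorbs the other from one side, so commuting idempotents force `ofFilter f = grill f`.
For `f` the image of `atTop` under an injective sequence this fails (the even-indexed terms are
frequent but not eventual). Applied to the powers of `x`, it shows that they repeat, hence are
eventually periodic, hence eventually constant: `x^N = x^(N+1)`. Applied to a strictly monotone
or antitone sequence in a chain, it yields finiteness.

The upfamily `Δ` of sets containing two of `e`, `f`, `ef` (for commuting idempotents `e`, `f`)
satisfies `Δ * Δ = ⟨ef⟩ = ⟨ef⟩ * Δ`, so `Δ² = Δ³` while `Δ ≠ Δ²` unless `ef ∈ {e, f}`, against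
sub-Cliffordness; nor is `Δ` regular unless `ef ∈ {e, f}`. Hence the idempotents of `X` form a chain. For regular `x` with `xbx = x`,
comparability of `xb` and `bx` together with `x^N = x^(N+1)` makes `x` idempotent.

Conversely, on a finite chain `C ∈ 𝓐 * 𝓑` iff `min a b ∈ C` for all `a ∈ A`, `b ∈ B` and some
`A ∈ 𝓐`, `B ∈ 𝓑`, a condition symmetric in `𝓐` and `𝓑`.
-/

open Filter Function MulOpposite

section Semigroup

variable {M : Type*} [Semigroup M]

theorem ppow_succ' (a : M) (n : ℕ) : ppow a (n + 1) = a * ppow a n := by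
  induction n with
  | zero => rfl
  | succ n ih => show ppow a (n + 1) * a = a * (ppow a n * a); rw [ih, mul_assoc]

theorem ppow_mul_ppow (a : M) (i j : ℕ) : ppow a i * ppow a j = ppow a (i + j + 1) := by
  induction j with
  | zero => rfl
  | succ j ih => rw [ppow, ← mul_assoc, ih]; rfl

theorem ppow_add_eq_of_ppow_eq {a : M} {m n : ℕ} (h : ppow a m = ppow a n) (k : ℕ) :
    ppow a (m + k) = ppow a (n + k) := by
  induction k with
  | zero => exact h
  | succ k ih => rw [← add_assoc, ← add_assoc, ppow, ih]; rfl

theorem ppow_op (a : M) (n : ℕ) : ppow (op a) n = op (ppow a n) := by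
  induction n with
  | zero => rfl
  | succ n ih => rw [ppow, ih, ppow_succ', op_mul]

theorem frequently_ppow_eq_of_ppow_eq {x : M} {a b : ℕ} (h : ppow x a = ppow x b) (hab : a < b) :
    ∃ᶠ n in atTop, ppow x n = ppow x a := by
  obtain ⟨d, rfl⟩ := Nat.exists_eq_add_of_lt hab
  have hper (k : ℕ) : ppow x (a + k * (d + 1)) = ppow x a := by
    induction k with
    | zero => simp
    | succ k ih =>
      rw [show a + (k + 1) * (d + 1) = a + d + 1 + k * (d + 1) by ring,
        ← ppow_add_eq_of_ppow_eq h, ih]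
  exact frequently_atTop.2 fun N => ⟨a + N * (d + 1), by nlinarith, hper N⟩

end Semigroup

section InverseSemigroup

variable {M : Type*} [Semigroup M] {e f : M}

theorem existsUnique_inverse_of_commute_of_isIdempotentElem (hcomm : ∀ a b : M, Commute a b)
    (hidem : ∀ a : M, IsIdempotentElem a) (a : M) : ∃! b, a * b * a = a ∧ b * a * b = b := by
  refine ⟨a, by simp only [(hidem a).eq, and_self], fun b ⟨hab, hba⟩ => ?_⟩
  calc b = b * a * b := hba.symm
    _ = a * b := by rw [mul_assoc, (hcomm a b).eq, ← mul_assoc, (hidem b).eq, hcomm]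
    _ = a * b * a := by rw [mul_assoc, (hcomm b a).eq, ← mul_assoc, (hidem a).eq]
    _ = a := hab

variable (hinv : ∀ a : M, ∃! b, a * b * a = a ∧ b * a * b = b)
include hinv

theorem IsIdempotentElem.mul_of_existsUnique_inverse (he : IsIdempotentElem e)
    (hf : IsIdempotentElem f) : IsIdempotentElem (e * f) := by
  -- The inverse `x` of `ef` equals `fxe`, hence is idempotent, hence its own inverse: `x = ef`.
  obtain ⟨x, ⟨hx₁, hx₂⟩, hx⟩ := hinv (e * f)
  have hfxe : f * x * e = x := by
    refine hx _ ⟨?_, ?_⟩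
    · calc e * f * (f * x * e) * (e * f) = e * f * x * (e * f) := by
            simp only [mul_assoc, he.mul_self_mul, hf.mul_self_mul]
        _ = e * f := hx₁
    · calc f * x * e * (e * f) * (f * x * e) = f * (x * (e * f) * x) * e := by
            simp only [mul_assoc, he.mul_self_mul, hf.mul_self_mul]
        _ = f * x * e := by rw [hx₂]
  have hxx : IsIdempotentElem x := by
    calc x * x = f * x * e * (f * x * e) := by rw [hfxe]
      _ = f * (x * (e * f) * x) * e := by simp only [mul_assoc]
      _ = x := by rw [hx₂, hfxe]
  have hself : x * x * x = x ∧ x * x * x = x := by simp only [hxx.eq, and_self]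
  rwa [(hinv x).unique ⟨hx₂, hx₁⟩ hself]

theorem IsIdempotentElem.commute_of_existsUnique_inverse (he : IsIdempotentElem e)
    (hf : IsIdempotentElem f) : Commute e f := by
  have hef := he.mul_of_existsUnique_inverse hinv hf
  have hfe := hf.mul_of_existsUnique_inverse hinv he
  refine (hinv (e * f)).unique (y₁ := e * f) ?_ ?_
  · simp only [hef.eq, and_self]
  · constructor
    · calc e * f * (f * e) * (e * f) = e * f * (e * f) := by
            simp only [mul_assoc, he.mul_self_mul, hf.mul_self_mul]
        _ = e * f := hef.eq
    · calc f * e * (e * f) * (f * e) = f * e * (f * e) := by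
            simp only [mul_assoc, he.mul_self_mul, hf.mul_self_mul]
        _ = f * e := hfe.eq

end InverseSemigroup

section RegularElement

variable {M : Type*} [Semigroup M] {x b : M} {N : ℕ}

theorem isIdempotentElem_of_ppow_eq_of_mul_mul_eq_left (hxbx : x * b * x = x)
    (hN : ppow x N = ppow x (N + 1)) (hle : b * x * (x * b) = x * b) : IsIdempotentElem x := by
  -- `bx` is a left identity for `x`, so `b^k x^k = bx` for all `k`; now cancel `x^N = x^(N+1)`.
  have hbx : IsIdempotentElem (b * x) := by
    calc b * x * (b * x) = b * (x * b * x) := by simp only [mul_assoc]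
      _ = b * x := by rw [hxbx]
  have hbxx : b * x * x = x := by
    have hsandwich : b * x * x * (b * x) = x := by
      calc b * x * x * (b * x) = b * x * (x * b) * x := by simp only [mul_assoc]
        _ = x := by rw [hle, hxbx]
    calc b * x * x = b * x * (b * x * x * (b * x)) := by rw [hsandwich]
      _ = b * x * (b * x) * x * (b * x) := by simp only [mul_assoc]
      _ = x := by rw [hbx.eq, hsandwich]
  have hpow : ∀ k, ppow b k * ppow x k = b * x := by
    intro k
    induction k with
    | zero => rfl
    | succ k ih =>
      calc ppow b (k + 1) * ppow x (k + 1) = b * (ppow b k * ppow x k) * x := by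
            rw [ppow_succ']; simp only [ppow, mul_assoc]
        _ = b * x := by rw [ih, mul_assoc, hbxx]
  have hx : b * x = x := by
    calc b * x = ppow b N * ppow x (N + 1) := by rw [← hN, hpow]
      _ = x := by rw [ppow, ← mul_assoc, hpow, hbxx]
  rw [IsIdempotentElem, ← hx, hbx.eq]

theorem isIdempotentElem_of_ppow_eq_of_mul_mul_eq (hxbx : x * b * x = x)
    (hN : ppow x N = ppow x (N + 1))
    (hle : b * x * (x * b) = x * b ∨ b * x * (x * b) = b * x) : IsIdempotentElem x := by
  refine hle.elim (isIdempotentElem_of_ppow_eq_of_mul_mul_eq_left hxbx hN) fun hle => ?_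
  -- the mirror case, read in the opposite semigroup
  have hop : IsIdempotentElem (op x) := by
    refine isIdempotentElem_of_ppow_eq_of_mul_mul_eq_left (b := op b) (N := N) ?_ ?_ ?_
    · rw [← op_mul, ← op_mul, ← mul_assoc, hxbx]
    · rw [ppow_op, ppow_op, hN]
    · rw [← op_mul, ← op_mul, ← op_mul, hle]
  exact op_injective (by rw [op_mul]; exact hop)

end RegularElement

section LinearSemilattice

variable {X : Type*}

theorem exists_linearOrder_mul_eq_min [Semigroup X] (hcomm : ∀ x y : X, x * y = y * x)
    (hlin : ∀ x y : X, x * y = x ∨ x * y = y) :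
    ∃ _ : LinearOrder X, ∀ a b : X, a * b = min a b := by
  let _ : LinearOrder X :=
    { le a b := a * b = a
      le_refl a := (hlin a a).elim id id
      le_trans a b c (hab : a * b = a) (hbc : b * c = b) := show a * c = a by
        rw [← hab, mul_assoc, hbc]
      le_antisymm a b (hab : a * b = a) (hba : b * a = b) := by rw [← hab, hcomm, hba]
      le_total a b := (hlin a b).imp id fun h => show b * a = b by rw [hcomm, h]
      toDecidableLE := Classical.decRel _ }
  refine ⟨inferInstance, fun a b => ?_⟩
  rcases le_total a b with h | h
  · rw [min_eq_left h]; exact h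
  · rw [min_eq_right h, hcomm]; exact h

theorem exists_mulEquiv_L [Mul X] [LinearOrder X] [Finite X] (hmin : ∀ a b : X, a * b = min a b) :
    ∃ n : ℕ, Nonempty (X ≃* L n) := by
  have := Fintype.ofFinite X
  let o : Fin (Fintype.card X) ≃o X := monoEquivOfFin X rfl
  refine ⟨_, ⟨{ toEquiv := o.symm.toEquiv, map_mul' := fun a b => ?_ }⟩⟩
  rw [hmin]
  exact o.symm.monotone.map_min

end LinearSemilattice

namespace Upfamily

variable {X : Type*}

@[ext]
theorem ext {F G : Upfamily X} (h : ∀ A, A ∈ F.1 ↔ A ∈ G.1) : F = G :=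
  Subtype.ext (Set.ext h)

theorem nonempty_of_mem {F : Upfamily X} {A : Set X} (hA : A ∈ F.1) : A.Nonempty :=
  F.2.2.1 A hA

theorem mem_of_superset {F : Upfamily X} {A B : Set X} (hA : A ∈ F.1) (hAB : A ⊆ B) : B ∈ F.1 :=
  F.2.2.2 A hA B hAB

theorem mem_mul [Mul X] {F G : Upfamily X} {C : Set X} :
    C ∈ (F * G).1 ↔ {a | (a * ·) ⁻¹' C ∈ G.1} ∈ F.1 := by
  constructor
  · rintro ⟨A, hA, B, hB, hBC⟩
    exact mem_of_superset hA fun a ha => mem_of_superset (hB a ha) fun y hy =>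
      hBC (mem_biUnion ha ⟨y, hy, rfl⟩)
  · refine fun h => ⟨_, h, fun a => (a * ·) ⁻¹' C, fun a ha => ha, ?_⟩
    simp only [iUnion_subset_iff, image_subset_iff]
    exact fun _ _ => subset_rfl

instance [Semigroup X] : Semigroup (Upfamily X) where
  mul_assoc F G H := by
    ext C
    simp only [mem_mul, preimage_ofPred_eq, preimage_preimage, mul_assoc]

theorem mem_principal {x : X} {A : Set X} : A ∈ (principal x).1 ↔ x ∈ A := Iff.rfl

theorem principal_mul [Mul X] (x y : X) : principal x * principal y = principal (x * y) := by
  ext C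
  exact mem_mul

theorem principal_injective : Injective (principal : X → Upfamily X) := fun x y h =>
  (mem_principal.1 (h ▸ mem_principal.2 rfl : {x} ∈ (principal y).1)).symm

theorem ppow_principal [Semigroup X] (x : X) (n : ℕ) :
    ppow (principal x) n = principal (ppow x n) := by
  induction n with
  | zero => rfl
  | succ n ih => rw [ppow, ih, principal_mul]; rfl

section OfFilter

def ofFilter (f : Filter X) [f.NeBot] : Upfamily X :=
  ⟨f.sets, ⟨univ, univ_mem⟩, fun _ hA => Filter.nonempty_of_mem hA,
    fun _ hA _ => Filter.mem_of_superset hA⟩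

def grill (f : Filter X) [f.NeBot] : Upfamily X :=
  ⟨{A | ∃ᶠ x in f, x ∈ A}, ⟨univ, .of_forall mem_univ⟩, fun _ hA => hA.exists,
    fun _ hA _ hAB => hA.mono fun _ hx => hAB hx⟩

variable {f : Filter X} [f.NeBot]

section Mul

variable [Mul X] {G : Upfamily X} {C : Set X}

theorem mem_ofFilter_mul : C ∈ (ofFilter f * G).1 ↔ ∀ᶠ a in f, (a * ·) ⁻¹' C ∈ G.1 := mem_mul

theorem mem_grill_mul : C ∈ (grill f * G).1 ↔ ∃ᶠ a in f, (a * ·) ⁻¹' C ∈ G.1 := mem_mul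

theorem preimage_mul_mem_ofFilter {a : X} :
    (a * ·) ⁻¹' C ∈ (ofFilter f).1 ↔ C ∈ map (a * ·) f := Iff.rfl

theorem preimage_mul_mem_grill {a : X} :
    (a * ·) ⁻¹' C ∈ (grill f).1 ↔ ∃ᶠ y in map (a * ·) f, y ∈ C := frequently_map.symm

end Mul

section IdempotentsCommute

variable [Semigroup X]
  (hcomm : ∀ F G : Upfamily X, IsIdempotentElem F → IsIdempotentElem G → Commute F G)
include hcomm

theorem ofFilter_eq_grill_of_map_mul_eq_self (h : ∀ᶠ a in f, map (a * ·) f = f) :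
    ofFilter f = grill f := by
  have absorb (V : Upfamily X)
      (hV : ∀ a, map (a * ·) f = f → ∀ C, (a * ·) ⁻¹' C ∈ V.1 ↔ C ∈ V.1) :
      ofFilter f * V = V ∧ grill f * V = V := by
    have hC (C : Set X) := h.mono fun a ha => hV a ha C
    exact ⟨ext fun C => mem_ofFilter_mul.trans <| (eventually_congr (hC C)).trans eventually_const,
      ext fun C => mem_grill_mul.trans <| (frequently_congr (hC C)).trans frequently_const⟩
  obtain ⟨hTT, hIT⟩ := absorb (ofFilter f) fun a ha C => by rw [preimage_mul_mem_ofFilter, ha]; rfl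
  obtain ⟨hTI, hII⟩ := absorb (grill f) fun a ha C => by rw [preimage_mul_mem_grill, ha]; rfl
  have hTI_comm : ofFilter f * grill f = grill f * ofFilter f := hcomm _ _ hTT hII
  rw [hTI, hIT] at hTI_comm
  exact hTI_comm.symm

theorem ofFilter_eq_grill_of_map_mul_eq_pure (h : ∀ᶠ a in f, map (a * ·) f = pure a) :
    ofFilter f = grill f := by
  have absorb (V : Upfamily X)
      (hV : ∀ a, map (a * ·) f = pure a → ∀ C, (a * ·) ⁻¹' C ∈ V.1 ↔ a ∈ C) :
      ofFilter f * V = ofFilter f ∧ grill f * V = grill f := by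
    have hC (C : Set X) := h.mono fun a ha => hV a ha C
    exact ⟨ext fun C => mem_ofFilter_mul.trans (eventually_congr (hC C)),
      ext fun C => mem_grill_mul.trans (frequently_congr (hC C))⟩
  obtain ⟨hTT, hIT⟩ := absorb (ofFilter f) fun a ha C => by
    rw [preimage_mul_mem_ofFilter, ha, mem_pure]
  obtain ⟨hTI, hII⟩ := absorb (grill f) fun a ha C => by
    rw [preimage_mul_mem_grill, ha, frequently_pure]
  have hTI_comm : ofFilter f * grill f = grill f * ofFilter f := hcomm _ _ hTT hII
  rwa [hTI, hIT] at hTI_comm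

end IdempotentsCommute

end OfFilter

section Sequence

variable {c : ℕ → X}

theorem not_injective_of_ofFilter_eq_grill
    (h : ofFilter (map c atTop) = grill (map c atTop)) : ¬ Injective c := by
  intro hinj
  have hfreq : c '' {n | Even n} ∈ (grill (map c atTop)).1 :=
    frequently_map.2 <| frequently_atTop.2 fun N =>
      ⟨2 * N, by omega, mem_image_of_mem c (even_two_mul N)⟩
  rw [← h] at hfreq
  obtain ⟨N, hN⟩ := eventually_atTop.1 (mem_map.1 hfreq)
  obtain ⟨m, ⟨k, hk⟩, hcm⟩ := hN (2 * N + 1) (by omega)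
  have := hinj hcm
  omega

variable [Semigroup X]
  (hcomm : ∀ F G : Upfamily X, IsIdempotentElem F → IsIdempotentElem G → Commute F G)
include hcomm

theorem not_injective_of_eventually_mul_eq_right (h : ∀ i, ∀ᶠ j in atTop, c i * c j = c j) :
    ¬ Injective c :=
  not_injective_of_ofFilter_eq_grill <| ofFilter_eq_grill_of_map_mul_eq_self hcomm <|
    eventually_map.2 <| .of_forall fun i => by rw [map_map]; exact map_congr (h i)

theorem not_injective_of_eventually_mul_eq_left (h : ∀ i, ∀ᶠ j in atTop, c i * c j = c i) :
    ¬ Injective c :=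
  not_injective_of_ofFilter_eq_grill <| ofFilter_eq_grill_of_map_mul_eq_pure hcomm <|
    eventually_map.2 <| .of_forall fun i => by rw [map_map]; exact (map_congr (h i)).trans map_const

theorem exists_ppow_eq_ppow_succ (x : X) : ∃ N, ppow x N = ppow x (N + 1) := by
  have hshift (i : ℕ) : map (ppow x i * ·) (map (ppow x) atTop) = map (ppow x) atTop := by
    have : (ppow x i * ·) ∘ ppow x = ppow x ∘ (· + (i + 1)) := funext fun j => by
      simp only [comp_apply, ppow_mul_ppow]; congr 1; omega
    rw [map_map, this, ← map_map, map_add_atTop_eq_nat]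
  have hT := ofFilter_eq_grill_of_map_mul_eq_self hcomm (eventually_map.2 (.of_forall hshift))
  obtain ⟨a, b, hab, hne⟩ := not_injective_iff.1 (not_injective_of_ofFilter_eq_grill hT)
  obtain ⟨m, hm⟩ : ∃ m, ∃ᶠ n in atTop, ppow x n = ppow x m :=
    hne.lt_or_gt.elim (fun h => ⟨a, frequently_ppow_eq_of_ppow_eq hab h⟩)
      fun h => ⟨b, frequently_ppow_eq_of_ppow_eq hab.symm h⟩
  have hev : {y | y = ppow x m} ∈ (ofFilter (map (ppow x) atTop)).1 := hT ▸ hm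
  obtain ⟨N, hN⟩ := eventually_atTop.1 (mem_map.1 hev)
  exact ⟨N, (hN N le_rfl).trans (hN (N + 1) N.le_succ).symm⟩

end Sequence

def triangle (a b c : X) : Upfamily X :=
  ⟨{A | a ∈ A ∧ b ∈ A ∨ a ∈ A ∧ c ∈ A ∨ b ∈ A ∧ c ∈ A}, ⟨univ, .inl ⟨trivial, trivial⟩⟩,
    fun _ hA => by rcases hA with ⟨h, -⟩ | ⟨h, -⟩ | ⟨h, -⟩ <;> exact ⟨_, h⟩,
    fun _ hA _ hAB => hA.imp (.imp (@hAB _) (@hAB _))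
      (.imp (.imp (@hAB _) (@hAB _)) (.imp (@hAB _) (@hAB _)))⟩

theorem mem_triangle {a b c : X} {A : Set X} :
    A ∈ (triangle a b c).1 ↔ a ∈ A ∧ b ∈ A ∨ a ∈ A ∧ c ∈ A ∨ b ∈ A ∧ c ∈ A := Iff.rfl

theorem triangle_ne_principal {a b c : X} (ha : c ≠ a) (hb : c ≠ b) :
    triangle a b c ≠ principal c := fun h => by
  have hab : ({a, b} : Set X) ∈ (triangle a b c).1 := .inl ⟨.inl rfl, .inr rfl⟩
  rw [h, mem_principal] at hab
  exact hab.elim ha hb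

section Triangle

variable [Semigroup X] {e f : X} (he : IsIdempotentElem e) (hf : IsIdempotentElem f)
  (hef : Commute e f)
include he hf hef

theorem preimage_mul_mem_triangle {a : X} (ha : a = e ∨ a = f ∨ a = e * f) {C : Set X} :
    (a * ·) ⁻¹' C ∈ (triangle e f (e * f)).1 ↔ e * f ∈ C := by
  have hfe : f * e = e * f := hef.eq.symm
  have hag : a * (e * f) = e * f := by
    rcases ha with rfl | rfl | rfl
    · exact he.mul_self_mul f
    · rw [← mul_assoc, hfe, mul_assoc, hf.eq]
    · exact IsIdempotentElem.mul_of_commute hef he hf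
  have hmul : a * e = e * f ∨ a * f = e * f := by
    rcases ha with rfl | rfl | rfl
    · exact .inr rfl
    · exact .inl hfe
    · exact .inl (by rw [mul_assoc, hfe, he.mul_self_mul])
  simp only [mem_triangle, mem_preimage, hag]
  rcases hmul with h | h <;> rw [h] <;> tauto

theorem principal_mul_triangle {a : X} (ha : a = e ∨ a = f ∨ a = e * f) :
    principal a * triangle e f (e * f) = principal (e * f) := by
  ext C
  exact mem_mul.trans (preimage_mul_mem_triangle he hf hef ha)

theorem triangle_mul_triangle :
    triangle e f (e * f) * triangle e f (e * f) = principal (e * f) := by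
  ext C
  rw [mem_mul, mem_triangle, mem_principal]
  simp only [mem_ofPred_eq, preimage_mul_mem_triangle he hf hef (.inl rfl),
    preimage_mul_mem_triangle he hf hef (.inr (.inl rfl)),
    preimage_mul_mem_triangle he hf hef (.inr (.inr rfl)), and_self, or_self]

theorem triangle_mul_mul_triangle_ne (hfe : e * f ≠ e) (hff : e * f ≠ f) (W : Upfamily X) :
    triangle e f (e * f) * W * triangle e f (e * f) ≠ triangle e f (e * f) := by
  set P : Set X := {e, f}
  have hfe' : f * e = e * f := hef.eq.symm
  have hg : IsIdempotentElem (e * f) := IsIdempotentElem.mul_of_commute hef he hf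
  have hnotMem (z : X) (hz : z * (e * f) = z ∨ e * f * z = z) : z ∉ P := by
    rintro (rfl | rfl)
    · refine hfe (hz.elim (fun h => ?_) fun h => ?_)
      · rwa [he.mul_self_mul] at h
      · rwa [mul_assoc, hfe', he.mul_self_mul] at h
    · refine hff (hz.elim (fun h => ?_) fun h => ?_)
      · rwa [← mul_assoc, hfe', mul_assoc, hf.eq] at h
      · rwa [mul_assoc, hf.eq] at h
  intro hW
  have hP : P ∈ (triangle e f (e * f)).1 := .inl ⟨.inl rfl, .inr rfl⟩
  rw [← hW, mul_assoc, mem_mul, mem_triangle] at hP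
  have hgP : e * f ∉ {a | (a * ·) ⁻¹' P ∈ (W * triangle e f (e * f)).1} := fun h => by
    obtain ⟨y, hy⟩ := nonempty_of_mem (F := W * triangle e f (e * f)) h
    exact hnotMem _ (.inr (by rw [← mul_assoc, hg.eq])) hy
  have heP : e ∈ {a | (a * ·) ⁻¹' P ∈ (W * triangle e f (e * f)).1} := by
    rcases hP with ⟨h, -⟩ | ⟨-, h⟩ | ⟨-, h⟩
    exacts [h, absurd h hgP, absurd h hgP]
  obtain ⟨w, hw⟩ := nonempty_of_mem (mem_mul.1 heP)
  have hwg : e * (w * (e * f)) ∉ P := hnotMem _ (.inl (by rw [mul_assoc, mul_assoc, hg.eq]))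
  have hwf : e * (w * f) ∈ P := by
    rcases hw with ⟨-, h⟩ | ⟨-, h⟩ | ⟨-, h⟩
    exacts [h, absurd h hwg, absurd h hwg]
  rcases hwf with h | h
  · exact hwg (by rw [← hfe', ← mul_assoc w, ← mul_assoc e, h, he.eq]; exact .inl rfl)
  · exact hff (calc e * f = e * (e * (w * f)) := by rw [h]
      _ = f := by rw [he.mul_self_mul, h])

end Triangle

section Band

variable [Semigroup X] {x e f : X}

theorem isIdempotentElem_principal_iff : IsIdempotentElem (principal x) ↔ IsIdempotentElem x := by
  rw [IsIdempotentElem, principal_mul, principal_injective.eq_iff]; rfl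

theorem exists_mul_mul_eq_of_principal {G : Upfamily X}
    (h : principal x * G * principal x = principal x) : ∃ b, x * b * x = x := by
  have hx : {x} ∈ (principal x * G * principal x).1 := by rw [h]; exact mem_principal.2 rfl
  rw [mem_mul, mem_mul] at hx
  exact nonempty_of_mem hx

theorem ppow_eq_of_subCliffordOn (hS : subCliffordOn (univ : Set (Upfamily X))) {n m : ℕ}
    (hnm : n < m) (h : ppow x (n + 1) = ppow x (m + 1)) : ppow x n = ppow x m := by
  apply principal_injective
  rw [← ppow_principal, ← ppow_principal]
  exact hS _ trivial n m hnm (by rw [ppow_principal, ppow_principal, h])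

variable (hcomm : ∀ F G : Upfamily X, IsIdempotentElem F → IsIdempotentElem G → Commute F G)
  (hreg : subCliffordOn (univ : Set (Upfamily X)) ∨ ∀ F : Upfamily X, ∃ G, F * G * F = F)
include hcomm

theorem commute_of_isIdempotentElem (he : IsIdempotentElem e) (hf : IsIdempotentElem f) :
    Commute e f := by
  have h := hcomm _ _ (isIdempotentElem_principal_iff.2 he) (isIdempotentElem_principal_iff.2 hf)
  rwa [Commute, SemiconjBy, principal_mul, principal_mul, principal_injective.eq_iff] at h

include hreg

theorem mul_eq_left_or_eq_right_of_isIdempotentElem (he : IsIdempotentElem e)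
    (hf : IsIdempotentElem f) : e * f = e ∨ e * f = f := by
  have hef := commute_of_isIdempotentElem hcomm he hf
  by_contra! hne
  have hne' := triangle_ne_principal hne.1 hne.2
  rcases hreg with hS | hR
  · have h01 : ppow (triangle e f (e * f)) 0 = ppow (triangle e f (e * f)) 1 := by
      refine hS _ trivial 0 1 one_pos ?_
      change _ = triangle e f (e * f) * triangle e f (e * f) * triangle e f (e * f)
      rw [triangle_mul_triangle he hf hef, principal_mul_triangle he hf hef (.inr (.inr rfl))]
      exact triangle_mul_triangle he hf hef
    exact hne' (h01.trans (triangle_mul_triangle he hf hef))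
  · obtain ⟨W, hW⟩ := hR (triangle e f (e * f))
    exact triangle_mul_mul_triangle_ne he hf hef hne.1 hne.2 W hW

theorem isIdempotentElem_of_idempotents_commute (x : X) : IsIdempotentElem x := by
  obtain ⟨N, hN⟩ := exists_ppow_eq_ppow_succ hcomm x
  rcases hreg with hS | hR
  · have hdesc (n : ℕ) (hn : ppow x n = ppow x (n + 1)) : ppow x 0 = ppow x 1 := by
      induction n with
      | zero => exact hn
      | succ n ih => exact ih (ppow_eq_of_subCliffordOn hS n.lt_succ_self hn)
    exact (hdesc N hN).symm
  · obtain ⟨b, hb⟩ := exists_mul_mul_eq_of_principal (hR (principal x)).choose_spec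
    have hxb : IsIdempotentElem (x * b) := by rw [IsIdempotentElem, ← mul_assoc, hb]
    have hbx : IsIdempotentElem (b * x) := by
      rw [IsIdempotentElem, mul_assoc, ← mul_assoc x, hb]
    exact isIdempotentElem_of_ppow_eq_of_mul_mul_eq hb hN
      (mul_eq_left_or_eq_right_of_isIdempotentElem hcomm (.inr hR) hbx hxb).symm

end Band

theorem mul_self_of_mul_eq_or [Mul X] (hlin : ∀ x y : X, x * y = x ∨ x * y = y)
    (F : Upfamily X) : F * F = F := by
  ext C
  rw [mem_mul]
  constructor
  · intro hU
    by_cases hUC : {a | (a * ·) ⁻¹' C ∈ F.1} ⊆ C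
    · exact mem_of_superset hU hUC
    obtain ⟨a, ha, haC⟩ := not_subset.1 hUC
    refine mem_of_superset ha fun y (hy : a * y ∈ C) => ?_
    rcases hlin a y with h | h
    · exact absurd (h ▸ hy) haC
    · rwa [h] at hy
  · intro hC
    refine mem_of_superset hC fun a ha => mem_of_superset hC fun y hy => ?_
    rcases hlin a y with h | h
    · show a * y ∈ C; rwa [h]
    · show a * y ∈ C; rwa [h]

section Chain

variable [Mul X] [LinearOrder X] (hmin : ∀ a b : X, a * b = min a b)
include hmin

theorem mem_mul_iff_of_mul_eq_min [Finite X] {F G : Upfamily X} {C : Set X} :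
    C ∈ (F * G).1 ↔ ∃ A ∈ F.1, ∃ B ∈ G.1, ∀ a ∈ A, ∀ b ∈ B, min a b ∈ C := by
  refine ⟨fun hU => ?_, fun ⟨A, hA, B, hB, hAB⟩ => mem_mul.2 <| mem_of_superset hA fun a ha =>
    mem_of_superset hB fun b hb => show a * b ∈ C by rw [hmin]; exact hAB a ha b hb⟩
  rw [mem_mul] at hU
  set U := {a | (a * ·) ⁻¹' C ∈ G.1}
  refine ⟨U, hU, ?_⟩
  by_cases hUC : U ⊆ C
  · obtain ⟨M, hM, hMmax⟩ := exists_max_image U id (toFinite U) (nonempty_of_mem hU)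
    refine ⟨_, hM, fun a ha b (hb : M * b ∈ C) => ?_⟩
    rcases le_total a b with hab | hba
    · rw [min_eq_left hab]; exact hUC ha
    · rwa [min_eq_right hba, ← min_eq_right (hba.trans (hMmax a ha)), ← hmin]
  · obtain ⟨u, ⟨hu, huC⟩, humin⟩ :=
      exists_min_image (U \ C) id (toFinite _) (sdiff_nonempty.2 hUC)
    refine ⟨_, hu, fun a ha b (hb : u * b ∈ C) => ?_⟩
    rw [hmin] at hb
    have hbu : b < u := lt_of_not_ge fun hub => huC (min_eq_left hub ▸ hb)
    rw [min_eq_right hbu.le] at hb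
    by_cases haC : a ∈ C
    · rcases min_choice a b with h | h <;> rw [h] <;> assumption
    · rwa [min_eq_right (hbu.trans_le (show u ≤ a from humin a ⟨ha, haC⟩)).le]

theorem mul_comm_of_mul_eq_min [Finite X] (F G : Upfamily X) : F * G = G * F := by
  ext C
  simp only [mem_mul_iff_of_mul_eq_min hmin]
  constructor <;> rintro ⟨A, hA, B, hB, hAB⟩ <;>
    exact ⟨B, hB, A, hA, fun b hb a ha => min_comm a b ▸ hAB a ha b hb⟩

end Chain

theorem finite_of_mul_eq_min [Semigroup X] [LinearOrder X] (hmin : ∀ a b : X, a * b = min a b)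
    (hcomm : ∀ F G : Upfamily X, IsIdempotentElem F → IsIdempotentElem G → Commute F G) :
    Finite X := by
  by_contra hfin
  have := not_finite_iff_infinite.1 hfin
  obtain ⟨c, hc | hc⟩ := Infinite.exists_strictMono_or_strictAnti X
  · refine not_injective_of_eventually_mul_eq_left hcomm (fun i => ?_) hc.injective
    exact (eventually_ge_atTop i).mono fun j hj => by rw [hmin, min_eq_left (hc.monotone hj)]
  · refine not_injective_of_eventually_mul_eq_right hcomm (fun i => ?_) hc.injective
    exact (eventually_ge_atTop i).mono fun j hj => by rw [hmin, min_eq_right (hc.antitone hj)]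

end Upfamily

/-- Theorem 1.4: for a semigroup `X`, the following are equivalent:
(1) `υ(X)` is a finite semilattice;
(2) `υ(X)` is an inverse semigroup;
(3) the idempotents of `υ(X)` commute and `υ(X)` is sub-Clifford or regular;
(4) `X` is a finite linear semilattice, isomorphic to `Lₙ` for some `n ∈ ω`. -/
theorem upfamilies_inverse_characterization (X : Type*) [Semigroup X] :
    List.TFAE
      [Finite (Upfamily X) ∧ (∀ F G : Upfamily X, F * G = G * F) ∧
          ∀ F : Upfamily X, F * F = F,
        ∀ F : Upfamily X, ∃! G : Upfamily X, F * G * F = F ∧ G * F * G = G,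
        (∀ F G : Upfamily X, F * F = F → G * G = G → F * G = G * F) ∧
          (subCliffordOn (univ : Set (Upfamily X)) ∨ ∀ F : Upfamily X, ∃ G, F * G * F = F),
        Finite X ∧ (∀ x y : X, x * y = y * x) ∧ (∀ x : X, x * x = x) ∧
          (∀ x y : X, x * y = x ∨ x * y = y) ∧ ∃ n : ℕ, Nonempty (X ≃* L n)] := by
  tfae_have 1 → 2 := fun ⟨_, hcomm, hidem⟩ =>
    existsUnique_inverse_of_commute_of_isIdempotentElem hcomm hidem
  tfae_have 2 → 3 := fun hinv =>
    ⟨fun _ _ => IsIdempotentElem.commute_of_existsUnique_inverse hinv,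
      .inr fun F => (hinv F).exists.imp fun _ hG => hG.1⟩
  tfae_have 3 → 4 := fun ⟨hcomm, hreg⟩ => by
    have hidem (x : X) := Upfamily.isIdempotentElem_of_idempotents_commute hcomm hreg x
    have hcommX (x y : X) := Upfamily.commute_of_isIdempotentElem hcomm (hidem x) (hidem y)
    have hlin (x y : X) :=
      Upfamily.mul_eq_left_or_eq_right_of_isIdempotentElem hcomm hreg (hidem x) (hidem y)
    obtain ⟨_, hmin⟩ := exists_linearOrder_mul_eq_min hcommX hlin
    have hfin := Upfamily.finite_of_mul_eq_min hmin hcomm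
    exact ⟨hfin, hcommX, hidem, hlin, exists_mulEquiv_L hmin⟩
  tfae_have 4 → 1 := by
    rintro ⟨_, hcommX, -, hlin, -⟩
    obtain ⟨_, hmin⟩ := exists_linearOrder_mul_eq_min hcommX hlin
    exact ⟨Finite.of_injective _ Subtype.val_injective, Upfamily.mul_comm_of_mul_eq_min hmin,
      Upfamily.mul_self_of_mul_eq_or hlin⟩
  tfae_finish
end

section
/- If for a semigroup X all idempotents of the semigroup β(X) of ultrafilters on X commute, then every cyclic subsemigroup {xⁿ : n ∈ ℕ} (for x ∈ X) of X is finite and every linear subsemigroup of X is finite. -/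
open Set

/-!
An idempotent ultrafilter that contains the powers `x^e` with `e` in a set `E` containing
arbitrarily long intervals, together with all their left translates by powers of `x`, exists by
the Ellis–Numakura lemma. If `x` has infinite order, taking for `E` the integers `n` with
`⌊log₂ n⌋` even, resp. odd, produces idempotents `p`, `q` such that `p * q` and `q * p` contain
disjoint sets. In an infinite linear subsemigroup Ramsey's theorem gives an injective sequence
with `c m * c n = c m` for all `m < n`, or `c m * c n = c n` for all `m < n`; the images under `c`
of two distinct free ultrafilters on `ℕ` then form a left- or right-zero band of two idempotents,
which do not commute.
-/

open Set Filter Function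

attribute [local instance] Ultrafilter.mul Ultrafilter.semigroup

namespace Ultrafilter

variable {X : Type*}

theorem mem_mul_iff [Mul X] {U V : Ultrafilter X} {A : Set X} :
    A ∈ U * V ↔ ∀ᶠ m in U, ∀ᶠ n in V, m * n ∈ A :=
  Iff.rfl

def toUpfamily (U : Ultrafilter X) : Upfamily X :=
  ⟨{A | A ∈ U}, ⟨univ, univ_mem⟩, fun _ hA => nonempty_of_mem hA,
    fun _ hA _ hAB => mem_of_superset hA hAB⟩

theorem toUpfamily_injective : Injective (toUpfamily (X := X)) := fun _ _ hUV =>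
  Ultrafilter.ext fun A => Set.ext_iff.mp (congrArg Subtype.val hUV) A

theorem toUpfamily_mem_betaS (U : Ultrafilter X) : U.toUpfamily ∈ betaS X := by
  refine ⟨fun A hA B hB => inter_mem hA hB, fun G hG hUG => Subtype.ext ?_⟩
  refine Subset.antisymm hUG fun B hB => ?_
  by_contra hBU
  have hBc : Bᶜ ∈ G.1 := hUG (compl_mem_iff_notMem.mpr hBU)
  simpa using G.2.2.1 _ (hG B hB _ hBc)

theorem toUpfamily_mul [Mul X] (U V : Ultrafilter X) :
    (U * V).toUpfamily = U.toUpfamily * V.toUpfamily := by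
  refine Subtype.ext (Set.ext fun C => ⟨fun hC => ?_, ?_⟩)
  · refine ⟨_, mem_mul_iff.mp hC, fun a => {b | a * b ∈ C}, fun _ ha => ha, ?_⟩
    simp only [iUnion_subset_iff, image_subset_iff]
    exact fun _ _ _ hb => hb
  · rintro ⟨A, hA, B, hB, hABC⟩
    refine mem_mul_iff.mpr (mem_of_superset hA fun a ha => mem_of_superset (hB a ha) ?_)
    exact fun b hb => hABC (mem_biUnion ha ⟨b, hb, rfl⟩)

theorem mul_comm_of_idemCommOn_betaS [Mul X] (h : idemCommOn (betaS X)) {p q : Ultrafilter X}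
    (hp : p * p = p) (hq : q * q = q) : p * q = q * p := by
  apply toUpfamily_injective
  rw [toUpfamily_mul, toUpfamily_mul]
  exact h _ (toUpfamily_mem_betaS p) _ (toUpfamily_mem_betaS q)
    (by rw [← toUpfamily_mul, hp]) (by rw [← toUpfamily_mul, hq])

theorem map_mul_map_of_eventually_mul_eq_left [Mul X] {ι : Type*} {c : ι → X}
    {U V : Ultrafilter ι} (h : ∀ᶠ i in U, ∀ᶠ j in V, c i * c j = c i) :
    map c U * map c V = map c U := by
  refine Ultrafilter.ext fun A => ?_
  simp only [mem_mul_iff, coe_map, eventually_map, mem_map]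
  refine eventually_congr (h.mono fun i hi => ?_)
  exact (eventually_congr (hi.mono fun j hj => by rw [hj])).trans eventually_const

theorem map_mul_map_of_eventually_mul_eq_right [Mul X] {ι : Type*} {c : ι → X}
    {U V : Ultrafilter ι} (h : ∀ᶠ i in U, ∀ᶠ j in V, c i * c j = c j) :
    map c U * map c V = map c V := by
  refine Ultrafilter.ext fun A => ?_
  simp only [mem_mul_iff, coe_map, eventually_map, mem_map]
  refine (eventually_congr (h.mono fun i hi => ?_)).trans eventually_const
  exact eventually_congr (hi.mono fun j hj => by rw [hj])

theorem map_injective {α β : Type*} {f : α → β} (hf : Injective f) : Injective (map f) :=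
  fun U V hUV => coe_injective (Filter.map_injective hf (by rw [← coe_map, hUV, coe_map]))

end Ultrafilter

section Powers

variable {X : Type*} [Semigroup X]

theorem ppow_mul_ppow_s4 (x : X) (a b : ℕ) : ppow x a * ppow x b = ppow x (a + b + 1) := by
  induction b with
  | zero => rfl
  | succ b ih => rw [ppow, ← mul_assoc, ih]; rfl

theorem finite_range_ppow_of_not_injective {x : X} (hx : ¬Injective (ppow x)) :
    (range (ppow x)).Finite := by
  obtain ⟨k, m, hkm, hxkm⟩ : ∃ k m, k < m ∧ ppow x k = ppow x m := by
    simp only [Injective, not_forall] at hx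
    obtain ⟨a, b, hab, hne⟩ := hx
    rcases Nat.lt_or_gt_of_ne hne with h | h
    · exact ⟨a, b, h, hab⟩
    · exact ⟨b, a, h, hab.symm⟩
  refine ((finite_Iic m).image (ppow x)).subset ?_
  rintro _ ⟨n, rfl⟩
  induction n with
  | zero => exact ⟨0, Nat.zero_le m, rfl⟩
  | succ n ih =>
    obtain ⟨j, hjm, hj⟩ := ih
    rcases (mem_Iic.mp hjm).lt_or_eq with hjm | rfl
    · exact ⟨j + 1, hjm, by rw [ppow, ppow, hj]⟩
    · exact ⟨k + 1, hkm, by rw [ppow, ppow, hxkm, hj]⟩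

end Powers

theorem exists_Icc_subset_log_two_mod_two (j K : ℕ) :
    ∃ a, Icc a (a + K) ⊆ {n | Nat.log 2 n % 2 = j % 2} := by
  refine ⟨2 ^ (2 * K + j), fun n hn => ?_⟩
  have hK : K < 2 ^ (2 * K + j) :=
    K.lt_two_pow_self.trans_le (Nat.pow_le_pow_right two_pos (by omega))
  have hlog : Nat.log 2 n = 2 * K + j :=
    Nat.log_eq_of_pow_le_of_lt_pow hn.1 (by rw [pow_succ]; linarith [hn.2])
  simp only [mem_ofPred_eq, hlog]
  omega

section PowIdeal

variable {X : Type*} [Semigroup X] (x : X) (E : Set ℕ)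

/-- A closed left ideal of the subsemigroup of ultrafilters containing the powers of `x`. -/
def powIdeal : Set (Ultrafilter X) :=
  {p | ppow x '' E ∈ p ∧ ∀ k, (ppow x k * ·) ⁻¹' (ppow x '' E) ∈ p}

variable {x E}

theorem range_ppow_mem_of_mem_powIdeal {p : Ultrafilter X} (hp : p ∈ powIdeal x E) :
    range (ppow x) ∈ p :=
  mem_of_superset hp.1 (image_subset_range _ _)

theorem mul_mem_powIdeal {p q : Ultrafilter X} (hp : range (ppow x) ∈ p)
    (hq : q ∈ powIdeal x E) : p * q ∈ powIdeal x E := by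
  refine ⟨Ultrafilter.mem_mul_iff.mpr (eventually_of_mem hp ?_),
    fun k => Ultrafilter.mem_mul_iff.mpr (eventually_of_mem hp ?_)⟩
  · rintro _ ⟨l, rfl⟩
    exact hq.2 l
  · rintro _ ⟨l, rfl⟩
    show ∀ᶠ n in q, ppow x k * (ppow x l * n) ∈ ppow x '' E
    simp only [← mul_assoc, ppow_mul_ppow_s4]
    exact hq.2 _

variable (x E)

theorem isClosed_powIdeal : IsClosed (powIdeal x E) := by
  have : powIdeal x E = {p | ppow x '' E ∈ p} ∩
      ⋂ k, {p | (ppow x k * ·) ⁻¹' (ppow x '' E) ∈ p} := by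
    ext p
    simp [powIdeal]
  rw [this]
  exact (ultrafilter_isClosed_basic _).inter
    (isClosed_iInter fun _ => ultrafilter_isClosed_basic _)

variable {x E}

/-- The image of a free ultrafilter under `K ↦ x ^ (a K + 1)`, where `[a K, a K + K] ⊆ E`. -/
theorem powIdeal_nonempty (hE : ∀ K, ∃ a, Icc a (a + K) ⊆ E) : (powIdeal x E).Nonempty := by
  choose a ha using hE
  refine ⟨(hyperfilter ℕ).map (ppow x ∘ a), ?_, fun k => ?_⟩
  · exact Ultrafilter.mem_map.mpr
      (univ_mem' fun K => mem_image_of_mem _ (ha K ⟨le_rfl, Nat.le_add_right _ _⟩))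
  · refine Ultrafilter.mem_map.mpr (mem_of_superset
      (Nat.hyperfilter_le_atTop (eventually_gt_atTop k)) fun K (hK : k < K) => ?_)
    simp only [mem_preimage, comp_apply, ppow_mul_ppow_s4]
    exact mem_image_of_mem _ (ha K ⟨by omega, by omega⟩)

theorem exists_idempotent_mem_powIdeal (hE : ∀ K, ∃ a, Icc a (a + K) ⊆ E) :
    ∃ p ∈ powIdeal x E, p * p = p :=
  exists_idempotent_in_compact_subsemigroup Ultrafilter.continuous_mul_left _
    (powIdeal_nonempty hE) (isClosed_powIdeal x E).isCompact
    fun _ hp _ hq => mul_mem_powIdeal (range_ppow_mem_of_mem_powIdeal hp) hq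

end PowIdeal

theorem exists_idempotents_not_commute_of_injective_ppow {X : Type*} [Semigroup X] {x : X}
    (hx : Injective (ppow x)) :
    ∃ p q : Ultrafilter X, p * p = p ∧ q * q = q ∧ p * q ≠ q * p := by
  let E : ℕ → Set ℕ := fun j => {n | Nat.log 2 n % 2 = j % 2}
  obtain ⟨p, hp, hpp⟩ :=
    exists_idempotent_mem_powIdeal (x := x) (exists_Icc_subset_log_two_mod_two 0)
  obtain ⟨q, hq, hqq⟩ :=
    exists_idempotent_mem_powIdeal (x := x) (exists_Icc_subset_log_two_mod_two 1)
  refine ⟨p, q, hpp, hqq, fun hpq => ?_⟩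
  have h₁ : ppow x '' E 1 ∈ q * p :=
    hpq ▸ (mul_mem_powIdeal (range_ppow_mem_of_mem_powIdeal hp) hq).1
  have h₀ : ppow x '' E 0 ∈ q * p :=
    (mul_mem_powIdeal (range_ppow_mem_of_mem_powIdeal hq) hp).1
  have hdisj : ppow x '' E 0 ∩ ppow x '' E 1 = ∅ := by
    rw [← image_inter hx, image_eq_empty]
    ext n
    simp [E]
  simpa [hdisj] using inter_mem h₀ h₁

theorem exists_ultrafilter_ne_le_atTop :
    ∃ U V : Ultrafilter ℕ, U ≠ V ∧ (U : Filter ℕ) ≤ atTop ∧ (V : Filter ℕ) ≤ atTop := by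
  have hfree : ∀ r, Tendsto (fun n => 2 * n + r) (hyperfilter ℕ) atTop := fun r =>
    (tendsto_atTop_mono (fun n => show n ≤ 2 * n + r by omega) tendsto_id).mono_left
      Nat.hyperfilter_le_atTop
  refine ⟨(hyperfilter ℕ).map (2 * · + 0), (hyperfilter ℕ).map (2 * · + 1), fun h => ?_,
    hfree 0, hfree 1⟩
  have hEven : {n | Even n} ∈ (hyperfilter ℕ).map (2 * · + 1) :=
    h ▸ Ultrafilter.mem_map.mpr (univ_mem' fun n => by simp)
  simp [Ultrafilter.mem_map] at hEven

section Chains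

variable {X : Type*} [Semigroup X]

theorem exists_idempotents_not_commute_of_chain {c : ℕ → X} (hc : Injective c)
    (hchain : (∀ m n, m < n → c m * c n = c m) ∨ ∀ m n, m < n → c m * c n = c n) :
    ∃ p q : Ultrafilter X, p * p = p ∧ q * q = q ∧ p * q ≠ q * p := by
  obtain ⟨U, V, hUV, hU, hV⟩ := exists_ultrafilter_ne_le_atTop
  have hne : U.map c ≠ V.map c := (Ultrafilter.map_injective hc).ne hUV
  have eventually_chain {P : ℕ → ℕ → Prop} (hP : ∀ m n, m < n → P m n) {W W' : Ultrafilter ℕ}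
      (hW' : (W' : Filter ℕ) ≤ atTop) : ∀ᶠ m in W, ∀ᶠ n in W', P m n :=
    Eventually.of_forall fun m => Eventually.mono (hW' (eventually_gt_atTop m)) (hP m)
  rcases hchain with hchain | hchain
  · have hmul {W W' : Ultrafilter ℕ} (hW' : (W' : Filter ℕ) ≤ atTop) :
        W.map c * W'.map c = W.map c :=
      Ultrafilter.map_mul_map_of_eventually_mul_eq_left (eventually_chain hchain hW')
    refine ⟨U.map c, V.map c, hmul hU, hmul hV, ?_⟩
    rwa [hmul hV, hmul hU]
  · have hmul {W W' : Ultrafilter ℕ} (hW' : (W' : Filter ℕ) ≤ atTop) :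
        W.map c * W'.map c = W'.map c :=
      Ultrafilter.map_mul_map_of_eventually_mul_eq_right (eventually_chain hchain hW')
    refine ⟨U.map c, V.map c, hmul hU, hmul hV, ?_⟩
    rw [hmul hV, hmul hU]
    exact hne.symm

/-- Ramsey's theorem for the transitive relation `a * b = a`. -/
theorem Set.Infinite.exists_injective_chain {Z : Set X} (hZ : Z.Infinite)
    (hlin : ∀ a ∈ Z, ∀ b ∈ Z, a * b = a ∨ a * b = b) :
    ∃ c : ℕ → X, Injective c ∧
      ((∀ m n, m < n → c m * c n = c m) ∨ ∀ m n, m < n → c m * c n = c n) := by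
  let e := hZ.natEmbedding Z
  let f : ℕ → X := fun n => e n
  have hf : Injective f := Subtype.val_injective.comp e.injective
  have : IsTrans X (fun a b => a * b = a) :=
    ⟨fun a b d (hab : a * b = a) (hbd : b * d = b) => by rw [← hab, mul_assoc, hbd]⟩
  obtain ⟨g, hg | hg⟩ := exists_increasing_or_nonincreasing_subseq (fun a b => a * b = a) f
  · exact ⟨f ∘ g, hf.comp g.injective, Or.inl hg⟩
  · refine ⟨f ∘ g, hf.comp g.injective, Or.inr fun m n hmn => ?_⟩
    exact (hlin _ (e _).2 _ (e _).2).resolve_left (hg m n hmn)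

end Chains

/-- Proposition 2.1: if all idempotents of the Stone-Čech extension `β(X)` of a
semigroup `X` commute, then all cyclic subsemigroups `{xⁿ : n ∈ ℕ}` and all linear
subsemigroups of `X` are finite. -/
theorem cyclic_and_linear_subsemigroups_finite {X : Type*} [Semigroup X]
    (h : ∀ F ∈ betaS X, ∀ G ∈ betaS X, F * F = F → G * G = G → F * G = G * F) :
    (∀ x : X, {y : X | ∃ n : ℕ, y = ppow x n}.Finite) ∧
      ∀ Z : Set X, (∀ a ∈ Z, ∀ b ∈ Z, a * b ∈ Z) →
        (∀ a ∈ Z, ∀ b ∈ Z, a * b = a ∨ a * b = b) → Z.Finite := by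
  have hcomm {p q : Ultrafilter X} : p * p = p → q * q = q → p * q = q * p :=
    Ultrafilter.mul_comm_of_idemCommOn_betaS h
  refine ⟨fun x => ?_, fun Z _ hlin => ?_⟩
  · by_cases hx : Injective (ppow x)
    · obtain ⟨p, q, hp, hq, hpq⟩ := exists_idempotents_not_commute_of_injective_ppow hx
      exact absurd (hcomm hp hq) hpq
    · exact (finite_range_ppow_of_not_injective hx).subset fun y ⟨n, hn⟩ => ⟨n, hn.symm⟩
  · by_contra hZ
    obtain ⟨c, hc, hchain⟩ := Set.Infinite.exists_injective_chain hZ hlin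
    obtain ⟨p, q, hp, hq, hpq⟩ := exists_idempotents_not_commute_of_chain hc hchain
    exact hpq (hcomm hp hq)
end

section
/- Let X be a semigroup. An element x ∈ X is regular in X (that is, x ∈ xXx) if and only if the principal ultrafilter ⟨x⟩ = {A ⊆ X : x ∈ A} is a regular element of the semigroup υ(X). -/
open Set

/-! Since `x ↦ ⟨x⟩` is multiplicative, `x = xyx` gives `⟨x⟩ = ⟨x⟩⟨y⟩⟨x⟩`. Conversely, if
`⟨x⟩ = ⟨x⟩𝓖⟨x⟩` then `{x}` is a member of `⟨x⟩𝓖⟨x⟩`, which contains `x * b * x` for every `b`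
in the member of `𝓖` attached to `x`; hence `x * b * x = x`. -/

namespace Upfamily

variable {X : Type*} [Mul X]

theorem mem_mul_principal_iff {F : Upfamily X} {y : X} {C : Set X} :
    C ∈ (F * principal y).1 ↔ ∃ A ∈ F.1, (· * y) '' A ⊆ C := by
  constructor
  · rintro ⟨A, hA, B, hB, hsub⟩
    exact ⟨A, hA, by
      rintro _ ⟨a, ha, rfl⟩
      exact hsub (mem_biUnion ha ⟨y, hB a ha, rfl⟩)⟩
  · rintro ⟨A, hA, hsub⟩
    refine ⟨A, hA, fun _ => {y}, fun _ _ => rfl, ?_⟩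
    simp only [image_singleton, iUnion_subset_iff]
    exact fun a ha => singleton_subset_iff.2 (hsub ⟨a, ha, rfl⟩)

theorem principal_mul_principal (x y : X) :
    principal x * principal y = principal (x * y) := by
  refine Subtype.ext (Set.ext fun C => mem_mul_principal_iff.trans ⟨?_, ?_⟩)
  · rintro ⟨A, hx, hsub⟩
    exact hsub ⟨x, hx, rfl⟩
  · intro hC
    exact ⟨{x}, rfl, by rw [image_singleton, singleton_subset_iff]; exact hC⟩

theorem exists_mul_mem_of_mem_principal_mul {x : X} {G : Upfamily X} {C : Set X}
    (hC : C ∈ (principal x * G).1) : ∃ b, x * b ∈ C := by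
  obtain ⟨A, hx, B, hB, hsub⟩ := hC
  obtain ⟨b, hb⟩ := G.2.2.1 (B x) (hB x hx)
  exact ⟨b, hsub (mem_biUnion hx ⟨b, hb, rfl⟩)⟩

end Upfamily

/-- Proposition 3.1: an element `x` of a semigroup `X` is regular in `X`
if and only if the principal ultrafilter `⟨x⟩` is regular in `υ(X)`. -/
theorem regular_iff_principal_regular {X : Type*} [Semigroup X] (x : X) :
    (∃ y : X, x * y * x = x) ↔
      ∃ G : Upfamily X,
        Upfamily.principal x * G * Upfamily.principal x = Upfamily.principal x := by
  constructor
  · rintro ⟨y, hy⟩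
    exact ⟨Upfamily.principal y, by
      rw [Upfamily.principal_mul_principal, Upfamily.principal_mul_principal, hy]⟩
  · rintro ⟨G, hG⟩
    have hx : ({x} : Set X) ∈ (Upfamily.principal x * G * Upfamily.principal x).1 := by
      rw [hG]
      exact rfl
    obtain ⟨A, hA, hAx⟩ := Upfamily.mem_mul_principal_iff.1 hx
    obtain ⟨b, hb⟩ := Upfamily.exists_mul_mem_of_mem_principal_mul hA
    exact ⟨b, hAx ⟨x * b, hb, rfl⟩⟩
end

section
/- Let X be a semigroup and Z ⊆ X a subsemigroup whose complement X∖Z is an ideal in X (that is, X(X∖Z) ∪ (X∖Z)X ⊆ X∖Z). If upfamilies 𝓐 ∈ υ(Z) ⊆ υ(X) and 𝓑 ∈ υ(X) satisfy 𝓐 = 𝓐*𝓑*𝓐, then 𝓐 = 𝓐*𝓑_Z*𝓐 for the upfamily 𝓑_Z = {B ∈ 𝓑 : B ⊆ Z} ∈ υ(Z). -/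
/-
Take `T ∈ 𝓐`. Since `𝓐 ∈ υ(Z)` and `𝓐 = 𝓐*𝓑*𝓐`, the set `T ∩ Z` contains `⋃_{x ∈ A₁} x * C_x`
with `C_x ∈ 𝓐` and `A₁ ⊇ ⋃_{a ∈ A₀} a * B_a`, `B_a ∈ 𝓑`, and we may shrink `A₀ ∈ 𝓐` into `Z`.
For `b ∈ B_a` and any `c ∈ C_{ab}` the product `a * b * c` lies in `Z`; as `X∖Z` is an ideal,
`b ∈ Z`. So every `B_a` is a member of `𝓑_Z` and `T ∈ 𝓐*𝓑_Z*𝓐`. The reverse inclusion is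
monotonicity of the operation, since `𝓑_Z ⊆ 𝓑`.
-/

open Set

theorem IsUpfamily.restrict {X : Type*} {G : Set (Set X)} (hG : IsUpfamily G) (Z : Set X)
    (hne : {C : Set X | C ∩ Z ∈ G}.Nonempty) : IsUpfamily {C : Set X | C ∩ Z ∈ G} := by
  refine ⟨hne, fun C hC => (hG.2.1 _ hC).mono inter_subset_left, fun C hC D hCD => ?_⟩
  exact hG.2.2 _ hC _ (inter_subset_inter_left Z hCD)

section UpMul

variable {X : Type*} [Mul X]

theorem upMul_mono {F F' G G' : Set (Set X)} (hF : F ⊆ F') (hG : G ⊆ G') :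
    upMul F G ⊆ upMul F' G' := by
  rintro C ⟨A, hA, B, hB, hsub⟩
  exact ⟨A, hF hA, B, fun a ha => hG (hB a ha), hsub⟩

theorem Set.Nonempty.of_upMul_left {F G : Set (Set X)} (h : (upMul F G).Nonempty) :
    F.Nonempty := by
  obtain ⟨_, A, hA, -⟩ := h
  exact ⟨A, hA⟩

theorem Set.Nonempty.of_upMul_right {F G : Set (Set X)} (hF : ∀ A ∈ F, A.Nonempty)
    (h : (upMul F G).Nonempty) : G.Nonempty := by
  obtain ⟨_, A, hA, B, hB, -⟩ := h
  obtain ⟨a, ha⟩ := hF A hA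
  exact ⟨B a, hB a ha⟩

theorem mem_of_mul_mul_mem {Z : Set X}
    (hideal : ∀ x y : X, x ∉ Z → x * y ∉ Z ∧ y * x ∉ Z) {a b c : X}
    (h : a * b * c ∈ Z) : b ∈ Z := by
  by_contra hb
  exact (hideal _ c (hideal b a hb).2).1 h

theorem mem_upMul_upMul_restrict {Z : Set X}
    (hideal : ∀ x y : X, x ∉ Z → x * y ∉ Z ∧ y * x ∉ Z) {F G H : Set (Set X)}
    (hF : ∀ A ∈ F, A ∩ Z ∈ F) (hH : ∀ C ∈ H, C.Nonempty) {T : Set X}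
    (hT : T ∩ Z ∈ upMul (upMul F G) H) :
    T ∈ upMul (upMul F {C : Set X | C ∩ Z ∈ G}) H := by
  obtain ⟨A₁, ⟨A₀, hA₀, Bf, hBf, hA₁⟩, Cf, hCf, hTZ⟩ := hT
  have hBfZ : ∀ a ∈ A₀ ∩ Z, Bf a ⊆ Z := by
    rintro a ⟨ha, -⟩ b hb
    have hab : a * b ∈ A₁ := hA₁ (mem_biUnion ha ⟨b, hb, rfl⟩)
    obtain ⟨c, hc⟩ := hH _ (hCf _ hab)
    exact mem_of_mul_mul_mem hideal (hTZ (mem_biUnion hab ⟨c, hc, rfl⟩)).2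
  refine ⟨A₁, ⟨A₀ ∩ Z, hF A₀ hA₀, Bf, fun a ha => ?_, ?_⟩, Cf, hCf,
    hTZ.trans inter_subset_left⟩
  · show Bf a ∩ Z ∈ G
    rw [inter_eq_left.mpr (hBfZ a ha)]
    exact hBf a ha.1
  · exact (biUnion_subset_biUnion_left inter_subset_left).trans hA₁

end UpMul

/-- `𝓐 ∈ υ(Z) ⊆ υ(X)` is encoded as `∀ S ∈ 𝓐, S ∩ Z ∈ 𝓐`, and `𝓑_Z` as `{C : C ∩ Z ∈ 𝓑}`,
the image in `υ(X)` of `{B ∈ 𝓑 : B ⊆ Z} ∈ υ(Z)`. -/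
theorem restrict_regularity_witness_general {X : Type*} [Semigroup X] (Z : Set X)
    (hideal : ∀ x y : X, x ∉ Z → x * y ∉ Z ∧ y * x ∉ Z)
    (A B : Upfamily X) (hA : ∀ S ∈ A.1, S ∩ Z ∈ A.1)
    (h : A = A * B * A) :
    IsUpfamily {C : Set X | C ∩ Z ∈ B.1} ∧
      (∀ C ∈ {C : Set X | C ∩ Z ∈ B.1}, C ∩ Z ∈ {C : Set X | C ∩ Z ∈ B.1}) ∧
      A.1 = upMul (upMul A.1 {C : Set X | C ∩ Z ∈ B.1}) A.1 := by
  have hABA : A.1 = upMul (upMul A.1 B.1) A.1 := congrArg Subtype.val h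
  have hsub : A.1 ⊆ upMul (upMul A.1 {C : Set X | C ∩ Z ∈ B.1}) A.1 := fun T hT =>
    mem_upMul_upMul_restrict hideal hA A.2.2.1 (hABA ▸ hA T hT)
  have hBZ : {C : Set X | C ∩ Z ∈ B.1}.Nonempty :=
    ((A.2.1.mono hsub).of_upMul_left).of_upMul_right A.2.2.1
  refine ⟨B.2.restrict Z hBZ, fun C hC => ?_, hsub.antisymm ?_⟩
  · rwa [mem_ofPred_eq, inter_assoc, inter_self]
  · have hBZB : {C : Set X | C ∩ Z ∈ B.1} ⊆ B.1 := fun C hC =>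
      B.2.2.2 _ hC _ inter_subset_left
    exact (upMul_mono (upMul_mono subset_rfl hBZB) subset_rfl).trans hABA.symm.subset

/-- Lemma 3.3: let `Z` be a subsemigroup of a semigroup `X` whose complement `X∖Z`
is an ideal in `X`.  An upfamily on `Z` is identified with the upfamily
`{A ⊆ X : A ∩ Z ∈ 𝓕}` on `X`, so that `𝓐 ∈ υ(Z) ⊆ υ(X)` means `∀ A ∈ 𝓐, A ∩ Z ∈ 𝓐`,
and the upfamily `𝓑_Z = {B ∈ 𝓑 : B ⊆ Z} ∈ υ(Z)` is identified with `{C : C ∩ Z ∈ 𝓑}`.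
If `𝓐 = 𝓐*𝓑*𝓐`, then `𝓑_Z` is an upfamily belonging to `υ(Z)` and `𝓐 = 𝓐*𝓑_Z*𝓐`. -/
theorem restrict_regularity_witness {X : Type*} [Semigroup X] (Z : Set X)
    (hZ : ∀ a ∈ Z, ∀ b ∈ Z, a * b ∈ Z)
    (hideal : ∀ x y : X, x ∉ Z → x * y ∉ Z ∧ y * x ∉ Z)
    (A B : Upfamily X) (hA : ∀ S ∈ A.1, S ∩ Z ∈ A.1)
    (h : A = A * B * A) :
    IsUpfamily {C : Set X | C ∩ Z ∈ B.1} ∧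
      (∀ C ∈ {C : Set X | C ∩ Z ∈ B.1}, C ∩ Z ∈ {C : Set X | C ∩ Z ∈ B.1}) ∧
      A.1 = upMul (upMul A.1 {C : Set X | C ∩ Z ∈ B.1}) A.1 :=
  restrict_regularity_witness_general Z hideal A B hA h
end

section
/- Let X be a semigroup, Z ⊆ X a subsemigroup whose complement X∖Z is an ideal in X, and let S be one of the semigroups β(X), λ(X), φ(X), N₂(X), υ(X). If the semigroup S is regular, then the semigroup S ∩ υ(Z) is regular. -/
open Set

/-!
Let `F` live on `Z` and `F * G * F = F`. Since `X ∖ Z` is an ideal, a product `a * b` lies in `Z`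
only if both factors do, so each `A ∩ Z ∈ F = F * G * F` is produced from members of `G` inside
`Z`. Hence `Z ∈ G`, and the trace `{C | C ∩ Z ∈ G}` of `G` on `Z` gives `F ⊆ F * H * F` for every
`H` containing it, while `F * H * F ⊆ F * G * F = F` for `H ⊆ G`. The trace is linked when `G`
is, and a filter containing `Z` already lives on `Z`. For `λ(X)`, Zorn's lemma extends the trace
to a maximal linked family `M` living on `Z`; it is maximal linked on `X`, and maximality of `F`
gives `F * M * F = F`.
-/

section UpMul

variable {X : Type*} [Mul X] {Z : Set X} {F F' G G' : Set (Set X)} {C : Set X}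

lemma upMul_mono_left (h : F ⊆ F') : upMul F G ⊆ upMul F' G := by
  rintro C ⟨A, hA, B, hB, hsub⟩
  exact ⟨A, h hA, B, hB, hsub⟩

lemma upMul_mono_right (h : G ⊆ G') : upMul F G ⊆ upMul F G' := by
  rintro C ⟨A, hA, B, hB, hsub⟩
  exact ⟨A, hA, B, fun a ha => h (hB a ha), hsub⟩

lemma mem_upMul_sep_subset (hZ : ∀ x y, x * y ∈ Z → x ∈ Z) (hG : ∀ B ∈ G, B.Nonempty)
    (hC : C ∈ upMul F G) (hCZ : C ⊆ Z) : C ∈ upMul {A ∈ F | A ⊆ Z} G := by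
  obtain ⟨A, hA, B, hB, hsub⟩ := hC
  refine ⟨A, ⟨hA, fun a ha => ?_⟩, B, hB, hsub⟩
  obtain ⟨b, hb⟩ := hG _ (hB a ha)
  exact hZ a b (hCZ (hsub (mem_biUnion ha ⟨b, hb, rfl⟩)))

lemma mem_upMul_preimage_inter (hZ : ∀ x y, x * y ∈ Z → y ∈ Z)
    (hC : C ∈ upMul F G) (hCZ : C ⊆ Z) : C ∈ upMul F ((· ∩ Z) ⁻¹' G) := by
  obtain ⟨A, hA, B, hB, hsub⟩ := hC
  refine ⟨A, hA, B, fun a ha => ?_, hsub⟩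
  have hBZ : B a ⊆ Z := fun b hb => hZ a b (hCZ (hsub (mem_biUnion ha ⟨b, hb, rfl⟩)))
  rw [mem_preimage, inter_eq_left.2 hBZ]
  exact hB a ha

end UpMul

lemma IsChain.intersecting_sUnion {α : Type*} {c : Set (Set (Set α))}
    (hc : IsChain (· ⊆ ·) c) (h : ∀ s ∈ c, s.Intersecting) : (⋃₀ c).Intersecting := by
  rintro A ⟨s, hs, hA⟩ B ⟨t, ht, hB⟩
  rcases hc.total hs ht with hst | hts
  · exact h t ht (hst hA) hB
  · exact h s hs hA (hts hB)

namespace Upfamily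

variable {X : Type*} {Z : Set X}

/-- `F` lies in the copy of `υ(Z)` inside `υ(X)`. -/
def SupportedOn (F : Upfamily X) (Z : Set X) : Prop := ∀ A ∈ F.1, A ∩ Z ∈ F.1

/-- The image in `υ(X)` of the trace of `G` on `Z`. -/
def restrict (G : Upfamily X) (Z : Set X) (hZ : Z ∈ G.1) : Upfamily X :=
  ⟨(· ∩ Z) ⁻¹' G.1, ⟨univ, by simpa using hZ⟩, fun _ hC => (G.2.2.1 _ hC).mono inter_subset_left,
    fun _ hC _ hCD => G.2.2.2 _ hC _ (inter_subset_inter_left Z hCD)⟩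

lemma restrict_supportedOn (G : Upfamily X) (hZ : Z ∈ G.1) : (G.restrict Z hZ).SupportedOn Z :=
  fun A hA => by simpa [restrict, inter_assoc] using hA

lemma restrict_subset (G : Upfamily X) (hZ : Z ∈ G.1) : (G.restrict Z hZ).1 ⊆ G.1 :=
  fun C hC => G.2.2.2 _ hC C inter_subset_left

lemma Linked.restrict {G : Upfamily X} (hG : G.Linked) (hZ : Z ∈ G.1) :
    (G.restrict Z hZ).Linked :=
  fun _ hA _ hB => (hG _ hA _ hB).mono (inter_subset_inter inter_subset_left inter_subset_left)

lemma IsFilter.supportedOn {G : Upfamily X} (hG : G.IsFilter) (hZ : Z ∈ G.1) : G.SupportedOn Z :=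
  fun A hA => hG A hA Z hZ

lemma linked_iff_intersecting {F : Upfamily X} : F.Linked ↔ F.1.Intersecting :=
  ⟨fun h _ hA _ hB => (h _ hA _ hB).not_disjoint,
    fun h _ hA _ hB => not_disjoint_iff_nonempty_inter.1 (h hA hB)⟩

lemma Linked.mul [Mul X] {F G : Upfamily X} (hF : F.Linked) (hG : G.Linked) :
    (F * G).Linked := by
  rintro D₁ ⟨A₁, hA₁, B₁, hB₁, hsub₁⟩ D₂ ⟨A₂, hA₂, B₂, hB₂, hsub₂⟩
  obtain ⟨a, ha₁, ha₂⟩ := hF A₁ hA₁ A₂ hA₂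
  obtain ⟨b, hb₁, hb₂⟩ := hG (B₁ a) (hB₁ a ha₁) (B₂ a) (hB₂ a ha₂)
  exact ⟨a * b, hsub₁ (mem_biUnion ha₁ ⟨b, hb₁, rfl⟩), hsub₂ (mem_biUnion ha₂ ⟨b, hb₂, rfl⟩)⟩

section Regular

variable [Mul X] {F G : Upfamily X}
  (hl : ∀ x y, x * y ∈ Z → x ∈ Z) (hr : ∀ x y, x * y ∈ Z → y ∈ Z)
  (hF : F.SupportedOn Z) (hFGF : F * G * F = F)
include hl hr hF hFGF

lemma inter_mem_upMul_preimage {A : Set X} (hA : A ∈ F.1) :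
    A ∩ Z ∈ upMul (upMul F.1 ((· ∩ Z) ⁻¹' G.1)) F.1 := by
  have hAZ : A ∩ Z ∈ upMul (upMul F.1 G.1) F.1 := by
    rw [show upMul (upMul F.1 G.1) F.1 = F.1 from congrArg Subtype.val hFGF]
    exact hF A hA
  exact upMul_mono_left (fun E hE => mem_upMul_preimage_inter hr hE.1 hE.2)
    (mem_upMul_sep_subset hl F.2.2.1 hAZ inter_subset_right)

lemma mem_of_mul_mul_eq_self : Z ∈ G.1 := by
  obtain ⟨A, hA⟩ := F.2.1
  obtain ⟨-, ⟨A₀, hA₀, B, hB, -⟩, -⟩ := inter_mem_upMul_preimage hl hr hF hFGF hA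
  obtain ⟨a, ha⟩ := F.2.2.1 A₀ hA₀
  exact G.2.2.2 _ (hB a ha) Z inter_subset_right

lemma subset_mul_mul {H : Upfamily X} (hH : (· ∩ Z) ⁻¹' G.1 ⊆ H.1) : F.1 ⊆ (F * H * F).1 :=
  fun A hA => (F * H * F).2.2.2 _
    (upMul_mono_left (upMul_mono_right hH) (inter_mem_upMul_preimage hl hr hF hFGF hA))
    A inter_subset_left

lemma mul_restrict_mul_eq (hZ : Z ∈ G.1) : F * G.restrict Z hZ * F = F := by
  refine Subtype.ext (subset_antisymm ?_ (subset_mul_mul hl hr hF hFGF subset_rfl))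
  calc (F * G.restrict Z hZ * F).1 ⊆ (F * G * F).1 :=
        upMul_mono_left (upMul_mono_right (G.restrict_subset hZ))
    _ = F.1 := congrArg Subtype.val hFGF

end Regular

lemma isUpfamily_of_maximal_intersecting {M : Set (Set X)} (hM : Maximal Set.Intersecting M)
    (hne : M.Nonempty) : IsUpfamily M :=
  ⟨hne, fun _ hA => nonempty_iff_ne_empty.2 (hM.1.ne_bot hA),
    fun _ hA _ hAB => hM.1.isUpperSet (fun _ ht hMt => hM.eq_of_subset ht hMt) hAB hA⟩

lemma isMaxLinked_of_maximal_intersecting {M : Set (Set X)} (hM : Maximal Set.Intersecting M)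
    (hne : M.Nonempty) :
    IsMaxLinked (⟨M, isUpfamily_of_maximal_intersecting hM hne⟩ : Upfamily X) :=
  ⟨linked_iff_intersecting.2 hM.1,
    fun _ hG hMG => Subtype.ext (hM.eq_of_subset (linked_iff_intersecting.1 hG) hMG)⟩

lemma maximal_intersecting_of_maximal_traceClosed {M : Set (Set X)}
    (hM : Maximal (fun H : Set (Set X) => H.Intersecting ∧ ∀ C ∈ H, C ∩ Z ∈ H) M)
    (hne : M.Nonempty) : Maximal Set.Intersecting M := by
  refine ⟨hM.1.1, fun T hT hMT S hS => ?_⟩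
  -- `S ∩ (C ∩ Z)` is nonempty for `C ∈ M`, so adding `S` and `S ∩ Z` keeps `M` in the class.
  have hSC : ∀ C ∈ M, (S ∩ (C ∩ Z)).Nonempty := fun C hC =>
    not_disjoint_iff_nonempty_inter.1 (hT hS (hMT (hM.1.2 C hC)))
  obtain ⟨C₀, hC₀⟩ := hne
  have hSZ : (S ∩ Z).Nonempty := (hSC C₀ hC₀).mono (inter_subset_inter_right S inter_subset_right)
  have hSZC : ∀ C ∈ M, ¬Disjoint (S ∩ Z) C := fun C hC =>
    ((hSC C hC).mono (subset_inter (inter_subset_inter_right S inter_subset_right)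
      (inter_subset_right.trans inter_subset_left))).not_disjoint
  have hint : (insert S (insert (S ∩ Z) M)).Intersecting := by
    refine (hM.1.1.insert hSZ.ne_empty hSZC).insert (hSZ.mono inter_subset_left).ne_empty ?_
    rintro C (rfl | hC)
    · exact (hSZ.mono (subset_inter inter_subset_left subset_rfl)).not_disjoint
    · exact ((hSC C hC).mono (inter_subset_inter_right S inter_subset_left)).not_disjoint
  have hclosed : ∀ C ∈ insert S (insert (S ∩ Z) M), C ∩ Z ∈ insert S (insert (S ∩ Z) M) := by
    rintro C (rfl | rfl | hC)
    · exact mem_insert_of_mem _ (mem_insert _ _)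
    · rw [inter_assoc, inter_self]
      exact mem_insert_of_mem _ (mem_insert _ _)
    · exact mem_insert_of_mem _ (mem_insert_of_mem _ (hM.1.2 C hC))
  have hsub : M ⊆ insert S (insert (S ∩ Z) M) :=
    (subset_insert _ _).trans (subset_insert _ _)
  rw [hM.eq_of_subset ⟨hint, hclosed⟩ hsub]
  exact mem_insert S _

lemma exists_isMaxLinked_supportedOn {R : Upfamily X} (hR : R.Linked) (hRZ : R.SupportedOn Z) :
    ∃ M : Upfamily X, M.IsMaxLinked ∧ M.SupportedOn Z ∧ R.1 ⊆ M.1 := by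
  obtain ⟨M, hRM, hM⟩ :=
    zorn_subset_nonempty {H : Set (Set X) | H.Intersecting ∧ ∀ C ∈ H, C ∩ Z ∈ H}
      (fun c hcP hc _ => ⟨⋃₀ c, ⟨hc.intersecting_sUnion fun s hs => (hcP hs).1,
        fun _ ⟨s, hs, hC⟩ => mem_sUnion_of_mem ((hcP hs).2 _ hC) hs⟩, fun _ => subset_sUnion_of_mem⟩)
      R.1 ⟨linked_iff_intersecting.1 hR, hRZ⟩
  have hne : M.Nonempty := R.2.1.mono hRM
  exact ⟨⟨M, _⟩, isMaxLinked_of_maximal_intersecting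
    (maximal_intersecting_of_maximal_traceClosed hM hne) hne, hM.1.2, hRM⟩

end Upfamily

theorem extension_regular_restricts_general {X : Type*} [Semigroup X] (Z : Set X)
    (hideal : ∀ x y : X, x ∉ Z → x * y ∉ Z ∧ y * x ∉ Z)
    (S : Set (Upfamily X))
    (hS : S = betaS X ∨ S = lambdaS X ∨ S = phiS X ∨ S = N2S X ∨
      S = (univ : Set (Upfamily X)))
    (hreg : ∀ F ∈ S, ∃ G ∈ S, F * G * F = F) :
    ∀ F ∈ S, (∀ A ∈ F.1, A ∩ Z ∈ F.1) →
      ∃ G ∈ S, (∀ A ∈ G.1, A ∩ Z ∈ G.1) ∧ F * G * F = F := by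
  intro F hF hFZ
  obtain ⟨G, hGS, hFGF⟩ := hreg F hF
  have hl : ∀ x y, x * y ∈ Z → x ∈ Z := fun x y h => by_contra fun hx => (hideal x y hx).1 h
  have hr : ∀ x y, x * y ∈ Z → y ∈ Z := fun x y h => by_contra fun hy => (hideal y x hy).2 h
  have hZG : Z ∈ G.1 := Upfamily.mem_of_mul_mul_eq_self hl hr hFZ hFGF
  rcases hS with rfl | rfl | rfl | rfl | rfl
  · exact ⟨G, hGS, hGS.1.supportedOn hZG, hFGF⟩
  · obtain ⟨M, hM, hMZ, hGM⟩ :=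
      Upfamily.exists_isMaxLinked_supportedOn (hGS.1.restrict hZG) (G.restrict_supportedOn hZG)
    have hFMF : F = F * M * F := hF.2 _ ((hF.1.mul hM.1).mul hF.1)
      (Upfamily.subset_mul_mul hl hr hFZ hFGF hGM)
    exact ⟨M, hM, hMZ, hFMF.symm⟩
  · exact ⟨G, hGS, Upfamily.IsFilter.supportedOn hGS hZG, hFGF⟩
  · exact ⟨G.restrict Z hZG, hGS.restrict hZG, G.restrict_supportedOn hZG,
      Upfamily.mul_restrict_mul_eq hl hr hFZ hFGF hZG⟩
  · exact ⟨G.restrict Z hZG, trivial, G.restrict_supportedOn hZG,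
      Upfamily.mul_restrict_mul_eq hl hr hFZ hFGF hZG⟩

/-- Corollary 3.4: let `Z` be a subsemigroup of a semigroup `X` whose complement
`X∖Z` is an ideal in `X`, and let `S` be one of the extensions
`β(X)`, `λ(X)`, `φ(X)`, `N₂(X)`, `υ(X)`.  An upfamily `F ∈ S` belongs to
(the canonical copy of) `υ(Z)` iff `∀ A ∈ F, A ∩ Z ∈ F`.  If `S` is regular, then
the semigroup `S ∩ υ(Z)` is regular. -/
theorem extension_regular_restricts {X : Type*} [Semigroup X] (Z : Set X)
    (hZ : ∀ a ∈ Z, ∀ b ∈ Z, a * b ∈ Z)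
    (hideal : ∀ x y : X, x ∉ Z → x * y ∉ Z ∧ y * x ∉ Z)
    (S : Set (Upfamily X))
    (hS : S = betaS X ∨ S = lambdaS X ∨ S = phiS X ∨ S = N2S X ∨
      S = (univ : Set (Upfamily X)))
    (hreg : ∀ F ∈ S, ∃ G ∈ S, F * G * F = F) :
    ∀ F ∈ S, (∀ A ∈ F.1, A ∩ Z ∈ F.1) →
      ∃ G ∈ S, (∀ A ∈ G.1, A ∩ Z ∈ G.1) ∧ F * G * F = F :=
  extension_regular_restricts_general Z hideal S hS hreg
end

section
/- The superextension λ(C₄) of the cyclic group C₄ of order 4 is isomorphic to the semigroup (C₂⊔L₁)×C₄. -/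
open Set

/-!
λ(C₄) has twelve elements: the principal ultrafilters `⟨x⟩`, the *stars* generated by the pairs
through `x` together with `C₄ ∖ {x}`, and the *triangles* generated by the pairs avoiding `x`.
Indeed, a maximal linked system contains exactly one set of each complementary pair, so it is
pinned down by which of the seven proper subsets containing `1` it contains, and each of the
linked choices contains the generators of one of the twelve systems. On such finitely generated
families membership, linkedness, maximality and the product are all decidable, so the
multiplication table is checked by computation: the principal systems form a copy of `C₄`
acting on the others by translation, and stars and triangles a copy of `C₂ × C₄`, the product
of two triangles being a star.
-/

namespace Upfamily

def adjoin {X : Type*} (F : Upfamily X) {A : Set X} (hA : A.Nonempty) : Upfamily X :=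
  ⟨F.1 ∪ {C | A ⊆ C}, ⟨F.2.1.mono subset_union_left,
    by rintro C (hC | hC); exacts [F.2.2.1 C hC, hA.mono hC],
    by rintro C (hC | hC) D hCD; exacts [Or.inl (F.2.2.2 C hC D hCD), Or.inr (hC.trans hCD)]⟩⟩

lemma Linked.adjoin {X : Type*} {F : Upfamily X} (hF : F.Linked) {A : Set X}
    (hA : A.Nonempty) (hmeet : ∀ B ∈ F.1, (A ∩ B).Nonempty) : (F.adjoin hA).Linked := by
  rintro B₁ (hB₁ | hB₁) B₂ (hB₂ | hB₂)
  · exact hF B₁ hB₁ B₂ hB₂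
  · exact (hmeet B₁ hB₁).mono fun x hx => ⟨hx.2, hB₂ hx.1⟩
  · exact (hmeet B₂ hB₂).mono fun x hx => ⟨hB₁ hx.1, hx.2⟩
  · exact hA.mono fun x hx => ⟨hB₁ hx, hB₂ hx⟩

lemma IsMaxLinked.compl_mem {X : Type*} {F : Upfamily X} (hF : F.IsMaxLinked) {A : Set X}
    (hA : A ∉ F.1) : Aᶜ ∈ F.1 := by
  by_contra hAc
  have hmeet : ∀ B ∈ F.1, (A ∩ B).Nonempty := fun B hB =>
    not_disjoint_iff_nonempty_inter.mp fun hdisj =>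
      hAc (F.2.2.2 B hB Aᶜ (subset_compl_comm.mp hdisj.subset_compl_right))
  obtain ⟨B, hB⟩ := F.2.1
  have hAne : A.Nonempty := (hmeet B hB).mono inter_subset_left
  have hFA : F = F.adjoin hAne := hF.2 _ (hF.1.adjoin hAne hmeet) subset_union_left
  apply hA
  rw [hFA]
  exact Or.inr (Subset.refl A)

end Upfamily

section FinitelyGenerated

variable {X : Type*}

def upClosure (S : Finset (Finset X)) : Set (Set X) := {A | ∃ s ∈ S, ↑s ⊆ A}

def Refines (S T : Finset (Finset X)) : Prop := ∀ s ∈ S, ∃ t ∈ T, t ⊆ s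

instance [DecidableEq X] (S T : Finset (Finset X)) : Decidable (Refines S T) :=
  inferInstanceAs (Decidable (∀ s ∈ S, ∃ t ∈ T, t ⊆ s))

lemma upClosure_subset_upClosure_iff {S T : Finset (Finset X)} :
    upClosure S ⊆ upClosure T ↔ Refines S T := by
  refine ⟨fun h s hs => ?_, ?_⟩
  · obtain ⟨t, ht, hts⟩ := h ⟨s, hs, subset_rfl⟩
    exact ⟨t, ht, Finset.coe_subset.mp hts⟩
  · rintro h A ⟨s, hs, hsA⟩
    obtain ⟨t, ht, hts⟩ := h s hs
    exact ⟨t, ht, (Finset.coe_subset.mpr hts).trans hsA⟩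

lemma upClosure_eq_upClosure_iff {S T : Finset (Finset X)} :
    upClosure S = upClosure T ↔ Refines S T ∧ Refines T S := by
  rw [Subset.antisymm_iff, upClosure_subset_upClosure_iff, upClosure_subset_upClosure_iff]

/-- The sets `⋃_{a ∈ s} a * t a` for `s ∈ S` and `t : s → T`, which generate
`upMul (upClosure S) (upClosure T)`. -/
def finMul [Mul X] [DecidableEq X] (S T : Finset (Finset X)) : Finset (Finset X) :=
  S.biUnion fun s => (s.pi fun _ => T).image fun t =>
    s.attach.biUnion fun a => (t a.1 a.2).image (a.1 * ·)

lemma upMul_upClosure_subset [Mul X] [DecidableEq X] (S T : Finset (Finset X)) :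
    upMul (upClosure S) (upClosure T) ⊆ upClosure (finMul S T) := by
  rintro C ⟨A, ⟨s, hs, hsA⟩, B, hB, hBC⟩
  choose t ht htB using hB
  refine ⟨s.attach.biUnion fun a => (t a.1 (hsA a.2)).image (a.1 * ·),
    Finset.mem_biUnion.mpr ⟨s, hs, Finset.mem_image.mpr
      ⟨fun a h => t a (hsA h), Finset.mem_pi.mpr fun a h => ht a (hsA h), rfl⟩⟩, ?_⟩
  intro x hx
  simp only [Finset.coe_biUnion, Finset.coe_image, mem_iUnion, mem_image] at hx
  obtain ⟨a, -, b, hb, rfl⟩ := hx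
  exact hBC (mem_biUnion (hsA a.2) ⟨b, htB a (hsA a.2) hb, rfl⟩)

lemma upClosure_finMul_subset [Mul X] [DecidableEq X] (S : Finset (Finset X))
    {T : Finset (Finset X)} (hT : T.Nonempty) :
    upClosure (finMul S T) ⊆ upMul (upClosure S) (upClosure T) := by
  rintro C ⟨u, hu, huC⟩
  simp only [finMul, Finset.mem_biUnion, Finset.mem_image, Finset.mem_pi] at hu
  obtain ⟨s, hs, t, ht, rfl⟩ := hu
  obtain ⟨t₀, ht₀⟩ := hT
  refine ⟨s, ⟨s, hs, subset_rfl⟩, fun a => if h : a ∈ s then ↑(t a h) else ↑t₀,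
    fun a (ha : a ∈ s) => ?_, ?_⟩
  · dsimp only
    rw [dif_pos ha]
    exact ⟨t a ha, ht a ha, subset_rfl⟩
  · simp only [iUnion_subset_iff]
    intro a (ha : a ∈ s) x ⟨b, hb, hx⟩
    rw [dif_pos ha] at hb
    exact huC (by simpa using ⟨a, ha, b, hb, hx⟩)

lemma upMul_upClosure [Mul X] [DecidableEq X] (S : Finset (Finset X)) {T : Finset (Finset X)}
    (hT : T.Nonempty) : upMul (upClosure S) (upClosure T) = upClosure (finMul S T) :=
  (upMul_upClosure_subset S T).antisymm (upClosure_finMul_subset S hT)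

def IsMaxLinkedGens [Fintype X] [DecidableEq X] (S : Finset (Finset X)) : Prop :=
  (∀ s ∈ S, ∀ t ∈ S, (s ∩ t).Nonempty) ∧
    ∀ A : Finset X, (∀ s ∈ S, (A ∩ s).Nonempty) → ∃ s ∈ S, s ⊆ A

instance [Fintype X] [DecidableEq X] (S : Finset (Finset X)) : Decidable (IsMaxLinkedGens S) :=
  inferInstanceAs (Decidable (_ ∧ _))

namespace IsMaxLinkedGens

variable [Fintype X] [DecidableEq X] {S : Finset (Finset X)}

lemma nonempty_of_mem (h : IsMaxLinkedGens S) {s : Finset X} (hs : s ∈ S) : s.Nonempty := by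
  simpa using h.1 s hs s hs

lemma nonempty (h : IsMaxLinkedGens S) : S.Nonempty := by
  obtain ⟨s, hs, -⟩ := h.2 Finset.univ fun s hs => by simpa using h.nonempty_of_mem hs
  exact ⟨s, hs⟩

lemma isUpfamily (h : IsMaxLinkedGens S) : IsUpfamily (upClosure S) := by
  obtain ⟨s₀, hs₀⟩ := h.nonempty
  refine ⟨⟨s₀, s₀, hs₀, subset_rfl⟩, ?_, ?_⟩
  · rintro A ⟨s, hs, hsA⟩
    exact (Finset.coe_nonempty.mpr (h.nonempty_of_mem hs)).mono hsA
  · rintro A ⟨s, hs, hsA⟩ B hAB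
    exact ⟨s, hs, hsA.trans hAB⟩

def toUpfamily (h : IsMaxLinkedGens S) : Upfamily X := ⟨upClosure S, h.isUpfamily⟩

lemma isMaxLinked (h : IsMaxLinkedGens S) : h.toUpfamily.IsMaxLinked := by
  classical
  constructor
  · rintro A ⟨s, hs, hsA⟩ B ⟨t, ht, htB⟩
    obtain ⟨x, hx⟩ := h.1 s hs t ht
    rw [Finset.mem_inter] at hx
    exact ⟨x, hsA hx.1, htB hx.2⟩
  · intro G hG hSG
    refine Subtype.ext (hSG.antisymm fun A hA => ?_)
    have hmeet : ∀ s ∈ S, (A.toFinset ∩ s).Nonempty := fun s hs => by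
      simpa [← Finset.coe_nonempty] using hG A hA s (hSG ⟨s, hs, subset_rfl⟩)
    obtain ⟨s, hs, hsA⟩ := h.2 A.toFinset hmeet
    exact ⟨s, hs, fun x hx => by simpa using hsA hx⟩

lemma toUpfamily_eq (h : IsMaxLinkedGens S) {F : Upfamily X} (hF : F.Linked)
    (hSF : ∀ s ∈ S, (↑s : Set X) ∈ F.1) : h.toUpfamily = F :=
  h.isMaxLinked.2 F hF fun _ ⟨s, hs, hsA⟩ => F.2.2.2 _ (hSF s hs) _ hsA

end IsMaxLinkedGens

end FinitelyGenerated

section C4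

instance {n : ℕ} : Fintype (L n) := inferInstanceAs (Fintype (Fin n))

instance {n : ℕ} : DecidableEq (L n) := inferInstanceAs (DecidableEq (Fin n))

def starGens (x : Cgrp 4) : Finset (Finset (Cgrp 4)) :=
  insert {x}ᶜ ({s | s.card = 2 ∧ x ∈ s} : Finset (Finset (Cgrp 4)))

def triangleGens (x : Cgrp 4) : Finset (Finset (Cgrp 4)) := {s | s.card = 2 ∧ x ∉ s}

def gens : OSum (Cgrp 2) (L 1) × Cgrp 4 → Finset (Finset (Cgrp 4))
  | (Sum.inr _, x) => {{x}}
  | (Sum.inl c, x) => if c = 1 then starGens x else triangleGens x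

lemma isMaxLinkedGens_gens : ∀ p, IsMaxLinkedGens (gens p) := by decide +kernel

lemma eq_of_refines_gens :
    ∀ p q, Refines (gens p) (gens q) ∧ Refines (gens q) (gens p) → p = q := by decide +kernel

lemma refines_finMul_gens : ∀ p q, Refines (finMul (gens p) (gens q)) (gens (p * q)) ∧
    Refines (gens (p * q)) (finMul (gens p) (gens q)) := by decide +kernel

def lambdaC4 (p : OSum (Cgrp 2) (L 1) × Cgrp 4) : Upfamily (Cgrp 4) :=
  (isMaxLinkedGens_gens p).toUpfamily

lemma lambdaC4_injective : Function.Injective lambdaC4 := fun p q hpq =>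
  eq_of_refines_gens p q (upClosure_eq_upClosure_iff.mp (congrArg Subtype.val hpq))

lemma lambdaC4_mul (p q : OSum (Cgrp 2) (L 1) × Cgrp 4) :
    lambdaC4 (p * q) = lambdaC4 p * lambdaC4 q := by
  refine Subtype.ext ?_
  change upClosure (gens (p * q)) = upMul (upClosure (gens p)) (upClosure (gens q))
  rw [upMul_upClosure _ (isMaxLinkedGens_gens q).nonempty, upClosure_eq_upClosure_iff]
  exact (refines_finMul_gens p q).symm

def pointedProperSubsets : Finset (Finset (Cgrp 4)) := {s | 1 ∈ s ∧ s ≠ Finset.univ}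

def orientation (U : Finset (Finset (Cgrp 4))) : Finset (Finset (Cgrp 4)) :=
  U ∪ (pointedProperSubsets \ U).image compl

lemma exists_gens_subset_orientation : ∀ U ∈ pointedProperSubsets.powerset,
    (∀ s ∈ orientation U, ∀ t ∈ orientation U, (s ∩ t).Nonempty) →
      ∃ p, gens p ⊆ orientation U := by
  decide +kernel

lemma exists_lambdaC4_eq {F : Upfamily (Cgrp 4)} (hF : F.IsMaxLinked) : ∃ p, lambdaC4 p = F := by
  classical
  set U := pointedProperSubsets.filter fun s : Finset (Cgrp 4) => (↑s : Set (Cgrp 4)) ∈ F.1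
  have hmem : ∀ s ∈ orientation U, (↑s : Set (Cgrp 4)) ∈ F.1 := by
    simp only [orientation, U, Finset.mem_union, Finset.mem_image, Finset.mem_sdiff,
      Finset.mem_filter]
    rintro s (⟨-, hs⟩ | ⟨t, ⟨ht, htF⟩, rfl⟩)
    · exact hs
    · rw [Finset.coe_compl]
      exact hF.compl_mem fun h => htF ⟨ht, h⟩
  have hlinked : ∀ s ∈ orientation U, ∀ t ∈ orientation U, (s ∩ t).Nonempty :=
    fun s hs t ht => by simpa [← Finset.coe_nonempty] using hF.1 _ (hmem s hs) _ (hmem t ht)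
  obtain ⟨p, hp⟩ := exists_gens_subset_orientation U
    (Finset.mem_powerset.mpr (Finset.filter_subset _ _)) hlinked
  exact ⟨p, (isMaxLinkedGens_gens p).toUpfamily_eq hF.1 fun s hs => hmem s (hp hs)⟩

end C4

/-- Proposition 4.1(3): `λ(C₄) ≅ (C₂ ⊔ L₁) × C₄`. -/
theorem superextension_C4 :
    MulIsoOnto ((OSum (Cgrp 2) (L 1)) × Cgrp 4) (lambdaS (Cgrp 4)) := by
  refine ⟨lambdaC4, lambdaC4_injective, ?_, lambdaC4_mul⟩
  ext F
  exact ⟨by rintro ⟨p, rfl⟩; exact (isMaxLinkedGens_gens p).isMaxLinked, exists_lambdaC4_eq⟩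
end

section
/- For every n ∈ ℕ the semigroup υ(Lₙ) is a finite semilattice; consequently the semigroups λ(Lₙ), φ(Lₙ), and N₂(Lₙ) are also finite semilattices. -/
open Set

/-- `S` is a finite semilattice: finite, commutative and idempotent. -/
def finiteSemilatticeOn {M : Type*} [Mul M] (S : Set M) : Prop :=
  S.Finite ∧ commOn S ∧ ∀ a ∈ S, a * a = a

/-! On the chain `Lₙ` a member `C` of `𝓕 * 𝓖` is always witnessed by a *constant* family:
with `A = {a | {b | min a b ∈ C} ∈ 𝓖} ∈ 𝓕`, one pivot `a ∈ A` (the least element of `A` outside `C`,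
or `max A` if `A ⊆ C`) already gives `min A B ⊆ C` for `B = {b | min a b ∈ C} ∈ 𝓖`. So `𝓕 * 𝓖` is
generated by the sets `min A B` with `A ∈ 𝓕`, `B ∈ 𝓖`, which is symmetric in `𝓕` and `𝓖`.
Idempotence only needs `min a b ∈ {a, b}`. -/

instance {X : Type*} [Finite X] : Finite (Upfamily X) :=
  inferInstanceAs (Finite {F : Set (Set X) // IsUpfamily F})

namespace Upfamily

variable {X : Type*} [Mul X]

theorem mem_mul_iff (F G : Upfamily X) (C : Set X) :
    C ∈ (F * G).1 ↔ {a | {b | a * b ∈ C} ∈ G.1} ∈ F.1 := by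
  constructor
  · rintro ⟨A, hA, B, hB, hsub⟩
    refine F.2.2.2 A hA _ fun a ha => G.2.2.2 (B a) (hB a ha) _ fun b hb => ?_
    exact hsub (mem_biUnion ha ⟨b, hb, rfl⟩)
  · intro h
    refine ⟨_, h, fun a => {b | a * b ∈ C}, fun a ha => ha, ?_⟩
    simp only [iUnion_subset_iff, image_subset_iff]
    exact fun _ _ _ hb => hb

theorem mem_mul_of_image2_subset {F G : Upfamily X} {A B C : Set X} (hA : A ∈ F.1) (hB : B ∈ G.1)
    (h : image2 (· * ·) A B ⊆ C) : C ∈ (F * G).1 :=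
  ⟨A, hA, fun _ => B, fun _ _ => hB, by rwa [iUnion_image_left]⟩

theorem mul_self_of_mul_eq_or_s14 (hX : ∀ a b : X, a * b = a ∨ a * b = b) (F : Upfamily X) :
    F * F = F := by
  refine Subtype.ext <| Set.ext fun C => ⟨fun h => ?_, fun h => ?_⟩
  · rw [mem_mul_iff] at h
    by_cases hA : {a | {b | a * b ∈ C} ∈ F.1} ⊆ C
    · exact F.2.2.2 _ h _ hA
    · obtain ⟨a, ha, haC⟩ := not_subset.1 hA
      refine F.2.2.2 _ ha _ fun b hb => ?_
      rcases hX a b with e | e <;> rw [mem_ofPred_eq, e] at hb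
      exacts [absurd hb haC, hb]
  · refine mem_mul_of_image2_subset h h ?_
    rintro _ ⟨a, ha, b, hb, rfl⟩
    show a * b ∈ C
    rcases hX a b with e | e <;> rw [e] <;> assumption

end Upfamily

namespace L

variable {n : ℕ}

instance : LinearOrder (L n) := inferInstanceAs (LinearOrder (Fin n))

instance : Finite (L n) := inferInstanceAs (Finite (Fin n))

theorem mul_def (a b : L n) : a * b = min a b := rfl

theorem mul_eq_or (a b : L n) : a * b = a ∨ a * b = b := min_choice a b

theorem exists_image2_mul_subset (A C : Set (L n)) (hA : A.Nonempty) :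
    ∃ a ∈ A, image2 (· * ·) A {b | a * b ∈ C} ⊆ C := by
  by_cases hAC : A ⊆ C
  · obtain ⟨a₁, ha₁, hmax⟩ := exists_max_image A id A.toFinite hA
    refine ⟨a₁, ha₁, ?_⟩
    rintro _ ⟨a, ha, b, hb, rfl⟩
    change a₁ * b ∈ C at hb
    show a * b ∈ C
    rcases le_total a b with hab | hba
    · rw [mul_def, min_eq_left hab]
      exact hAC ha
    · have hba₁ : b ≤ a₁ := hba.trans (hmax a ha)
      rw [mul_def, min_eq_right hba₁] at hb
      rwa [mul_def, min_eq_right hba]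
  · obtain ⟨a₂, ha₂, hmin⟩ :=
      exists_min_image (A \ C) id (A \ C).toFinite (nonempty_of_not_subset hAC)
    refine ⟨a₂, ha₂.1, ?_⟩
    rintro _ ⟨a, ha, b, hb, rfl⟩
    show a * b ∈ C
    have hba₂ : b < a₂ := by
      by_contra! h
      exact ha₂.2 (by rwa [mem_ofPred_eq, mul_def, min_eq_left h] at hb)
    have hbC : b ∈ C := by rwa [mem_ofPred_eq, mul_def, min_eq_right hba₂.le] at hb
    rcases le_total b a with hba | hab
    · rwa [mul_def, min_eq_right hba]
    · rw [mul_def, min_eq_left hab]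
      by_contra haC
      exact absurd (hmin a ⟨ha, haC⟩) (not_le.2 (hab.trans_lt hba₂))

theorem mem_upfamily_mul_iff (F G : Upfamily (L n)) (C : Set (L n)) :
    C ∈ (F * G).1 ↔ ∃ A ∈ F.1, ∃ B ∈ G.1, image2 (· * ·) A B ⊆ C := by
  refine ⟨fun h => ?_, fun ⟨A, hA, B, hB, hAB⟩ => Upfamily.mem_mul_of_image2_subset hA hB hAB⟩
  rw [Upfamily.mem_mul_iff] at h
  obtain ⟨a, ha, hsub⟩ := exists_image2_mul_subset _ C (F.2.2.1 _ h)
  exact ⟨_, h, _, ha, hsub⟩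

theorem upfamily_mul_comm (F G : Upfamily (L n)) : F * G = G * F := by
  have image2_mul_comm (A B : Set (L n)) : image2 (· * ·) A B = image2 (· * ·) B A :=
    image2_comm fun a b => min_comm a b
  refine Subtype.ext <| Set.ext fun C => ?_
  simp only [mem_upfamily_mul_iff]
  constructor <;> exact fun ⟨A, hA, B, hB, h⟩ => ⟨B, hB, A, hA, image2_mul_comm A B ▸ h⟩

end L

theorem finiteSemilatticeOn.mono {M : Type*} [Mul M] {S T : Set M}
    (hT : finiteSemilatticeOn T) (hST : S ⊆ T) : finiteSemilatticeOn S :=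
  ⟨hT.1.subset hST, fun a ha b hb => hT.2.1 a (hST ha) b (hST hb), fun a ha => hT.2.2 a (hST ha)⟩

/-- Proposition 4.2: for every `n ∈ ℕ` the semigroup `υ(Lₙ)` is a finite semilattice;
consequently the semigroups `λ(Lₙ)`, `φ(Lₙ)`, `N₂(Lₙ)` are also finite semilattices. -/
theorem upfamilies_of_Ln_finite_semilattice (n : ℕ) :
    finiteSemilatticeOn (univ : Set (Upfamily (L n))) ∧
      finiteSemilatticeOn (lambdaS (L n)) ∧
      finiteSemilatticeOn (phiS (L n)) ∧
      finiteSemilatticeOn (N2S (L n)) := by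
  have h : finiteSemilatticeOn (univ : Set (Upfamily (L n))) :=
    ⟨finite_univ, fun F _ G _ => L.upfamily_mul_comm F G,
      fun F _ => Upfamily.mul_self_of_mul_eq_or_s14 L.mul_eq_or F⟩
  exact ⟨h, h.mono (subset_univ _), h.mono (subset_univ _), h.mono (subset_univ _)⟩
end
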